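/- arXiv:math-ph/0610001 — 9 statements merged into one kernel-verified Lean document; each statement's English description precedes it below -/
import Mathlib

section
/- Every smooth 1-periodic function u : ℝ → ℝ can be written as the sum of two Lie brackets of smooth 1-periodic functions; that is, there exist smooth 1-periodic functions v₁, w₁, v₂, w₂ : ℝ → ℝ such that for all x, u(x) = (v₁(x)·w₁′(x) − v₁′(x)·w₁(x)) + (v₂(x)·w₂′(x) − v₂′(x)·w₂(x)). In other words, the Lie algebra Vect(S¹) equals its own commutator algebra. -/
def SmoothPeriodic (u : ℝ → ℝ) : Prop :=
  ContDiff ℝ (⊤ : ℕ∞) u ∧ ∀ x, u (x + 1) = u x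

/-- `Vect(S¹)` is equal to its own commutator algebra: every smooth 1-periodic function
is the sum of two Lie brackets `[v,w] = v·w′ − v′·w` of smooth 1-periodic functions. -/
theorem vectS1_eq_commutator (u : ℝ → ℝ) (hu : SmoothPeriodic u) :
    ∃ v₁ w₁ v₂ w₂ : ℝ → ℝ,
      SmoothPeriodic v₁ ∧ SmoothPeriodic w₁ ∧ SmoothPeriodic v₂ ∧ SmoothPeriodic w₂ ∧
      ∀ x, u x = (v₁ x * deriv w₁ x - deriv v₁ x * w₁ x)
               + (v₂ x * deriv w₂ x - deriv v₂ x * w₂ x) := by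
  obtain ⟨husm, huper⟩ := hu
  have hucont : Continuous u := husm.continuous
  have huP : Function.Periodic u 1 := huper
  have hπ : (0:ℝ) < 2 * Real.pi := by positivity
  -- a (nonnegative) bound on u
  obtain ⟨B, hB⟩ : ∃ B, ∀ x ∈ Set.Icc (0:ℝ) 1, ‖u x‖ ≤ B :=
    isCompact_Icc.exists_bound_of_continuousOn hucont.continuousOn
  have hBall : ∀ x, |u x| ≤ B := by
    intro x
    have hx : u x = u (Int.fract x) := by
      have := huP.sub_int_mul_eq (x := x) ⌊x⌋
      simp only [mul_one] at this
      rw [Int.fract, this]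
    rw [hx]
    have := hB (Int.fract x) ⟨Int.fract_nonneg x, (Int.fract_lt_one x).le⟩
    simpa [Real.norm_eq_abs] using this
  -- the positive function g = (B+1) + u/(2π), with g ≥ 1
  set g : ℝ → ℝ := fun x => (B + 1) + u x / (2 * Real.pi) with hg
  have hB0 : (0:ℝ) ≤ B := le_trans (abs_nonneg _) (hBall 0)
  have hgpos : ∀ x, 0 < g x := by
    intro x
    have h6 : (6:ℝ) ≤ 2 * Real.pi := by nlinarith [Real.pi_gt_three]
    have hub := abs_le.1 (hBall x)
    have key : 0 < (B + 1) * (2 * Real.pi) + u x := by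
      nlinarith [mul_le_mul_of_nonneg_left h6 (by linarith : (0:ℝ) ≤ B + 1)]
    have hgx : g x = ((B + 1) * (2 * Real.pi) + u x) / (2 * Real.pi) := by
      simp only [hg]; field_simp
    rw [hgx]
    exact div_pos key hπ
  have hgsm : ContDiff ℝ (⊤ : ℕ∞) g := contDiff_const.add (husm.div_const _)
  have hgper : ∀ x, g (x + 1) = g x := fun x => by simp [hg, huper x]
  -- h = sqrt of g, via exp/log: h² = g
  set h : ℝ → ℝ := fun x => Real.exp (Real.log (g x) / 2) with hh
  have hsq : ∀ x, h x * h x = g x := by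
    intro x
    simp only [hh]
    rw [← Real.exp_add]
    rw [show Real.log (g x) / 2 + Real.log (g x) / 2 = Real.log (g x) by ring]
    exact Real.exp_log (hgpos x)
  have hhsm : ContDiff ℝ (⊤ : ℕ∞) h := by
    rw [contDiff_iff_contDiffAt]
    intro x
    exact Real.contDiff_exp.contDiffAt.comp x
      (((Real.contDiffAt_log.mpr (hgpos x).ne').comp x hgsm.contDiffAt).div_const 2)
  have hhper : ∀ x, h (x + 1) = h x := fun x => by simp [hh, hgper x]
  have hhd : ∀ x, HasDerivAt h (deriv h x) x :=
    fun x => ((hhsm.differentiable (by simp)) x).hasDerivAt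
  -- trig building blocks
  have hsin : ∀ x : ℝ, HasDerivAt (fun y => Real.sin (2 * Real.pi * y))
      (2 * Real.pi * Real.cos (2 * Real.pi * x)) x := by
    intro x
    have := (Real.hasDerivAt_sin (2 * Real.pi * x)).comp x
      ((hasDerivAt_id x).const_mul (2 * Real.pi))
    simpa [Function.comp_def, mul_comm] using this
  have hcos : ∀ x : ℝ, HasDerivAt (fun y => Real.cos (2 * Real.pi * y))
      (-(2 * Real.pi * Real.sin (2 * Real.pi * x))) x := by
    intro x
    have := (Real.hasDerivAt_cos (2 * Real.pi * x)).comp x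
      ((hasDerivAt_id x).const_mul (2 * Real.pi))
    simpa [Function.comp_def, mul_comm] using this
  have hsinsm : ContDiff ℝ (⊤ : ℕ∞) (fun y : ℝ => Real.sin (2 * Real.pi * y)) :=
    Real.contDiff_sin.comp (contDiff_const.mul contDiff_id)
  have hcossm : ContDiff ℝ (⊤ : ℕ∞) (fun y : ℝ => Real.cos (2 * Real.pi * y)) :=
    Real.contDiff_cos.comp (contDiff_const.mul contDiff_id)
  have hper2 : ∀ x : ℝ, 2 * Real.pi * (x + 1) = 2 * Real.pi * x + 2 * Real.pi := by
    intro x; ring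
  -- the four functions
  refine ⟨fun x => Real.cos (2 * Real.pi * x) * h x,
          fun x => Real.sin (2 * Real.pi * x) * h x,
          fun x => Real.sin (2 * Real.pi * x),
          fun x => (B + 1) * Real.cos (2 * Real.pi * x),
          ⟨hcossm.mul hhsm, ?_⟩, ⟨hsinsm.mul hhsm, ?_⟩,
          ⟨hsinsm, ?_⟩, ⟨contDiff_const.mul hcossm, ?_⟩, ?_⟩
  · intro x; simp only [hper2 x, Real.cos_add_two_pi, hhper x]
  · intro x; simp only [hper2 x, Real.sin_add_two_pi, hhper x]
  · intro x; simp only [hper2 x, Real.sin_add_two_pi]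
  · intro x; simp only [hper2 x, Real.cos_add_two_pi]
  · intro x
    set s := Real.sin (2 * Real.pi * x)
    set cc := Real.cos (2 * Real.pi * x)
    set d := deriv h x
    have dv₁ : deriv (fun y => Real.cos (2 * Real.pi * y) * h y) x
        = -(2 * Real.pi * s) * h x + cc * d := ((hcos x).mul (hhd x)).deriv
    have dw₁ : deriv (fun y => Real.sin (2 * Real.pi * y) * h y) x
        = 2 * Real.pi * cc * h x + s * d := ((hsin x).mul (hhd x)).deriv
    have dv₂ : deriv (fun y => Real.sin (2 * Real.pi * y)) x = 2 * Real.pi * cc :=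
      (hsin x).deriv
    have dw₂ : deriv (fun y => (B + 1) * Real.cos (2 * Real.pi * y)) x
        = (B + 1) * -(2 * Real.pi * s) := (((hcos x)).const_mul (B + 1)).deriv
    rw [dv₁, dw₁, dv₂, dw₂]
    have hpyth : s ^ 2 + cc ^ 2 = 1 := Real.sin_sq_add_cos_sq _
    have e1 : h x * h x * (2 * Real.pi) = (B + 1) * (2 * Real.pi) + u x := by
      rw [hsq x]; simp only [hg]; field_simp
    linear_combination -(s ^ 2 + cc ^ 2) * e1 - u x * hpyth
end

section
/- Let n ∈ ℕ and let a₀, …, aₙ : ℝ → ℝ be smooth 1-periodic functions, and define the linear differential operator K by (K u)(x) = Σ_{k=0}^{n} a_k(x)·u^{(k)}(x) for smooth 1-periodic u. Suppose K satisfies the 2-cocycle condition: for all smooth 1-periodic u, v and all x, K([u,v])(x) = 2·(K v)(x)·u′(x) + (K v)′(x)·u(x) − 2·(K u)(x)·v′(x) − (K u)′(x)·v(x). Then there exist λ ∈ ℝ and a smooth 1-periodic function m : ℝ → ℝ such that for every smooth 1-periodic u and every x, (K u)(x) = λ·u‴(x) + 2·m(x)·u′(x) + m′(x)·u(x). (Equivalently,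 the second Gelfand–Fuks cohomology group of Vect(S¹) is one-dimensional, generated by the Virasoro cocycle.) -/
set_option maxHeartbeats 1000000

namespace GFAux
open Real
noncomputable section

def tg (α c d : ℝ) : ℝ → ℝ := fun x => α * Real.cos (c * x + d)

lemma tg_contDiff (α c d : ℝ) : ContDiff ℝ (⊤ : ℕ∞) (tg α c d) :=
  contDiff_const.mul (Real.contDiff_cos.comp ((contDiff_const.mul contDiff_id).add contDiff_const))

lemma tg_hasDerivAt (α c d x : ℝ) :
    HasDerivAt (tg α c d) (tg (α * c) c (d + π / 2) x) x := by
  have h1 : HasDerivAt (fun x : ℝ => c * x + d) c x := by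
    simpa using ((hasDerivAt_id x).const_mul c).add_const d
  have h2 := ((Real.hasDerivAt_cos (c * x + d)).comp x h1).const_mul α
  have h3 : HasDerivAt (tg α c d) (α * (-Real.sin (c * x + d) * c)) x := h2
  convert h3 using 1
  show α * c * Real.cos (c * x + (d + π / 2)) = _
  rw [show c * x + (d + π / 2) = (c * x + d) + π / 2 by ring, Real.cos_add_pi_div_two]
  ring

lemma tg_deriv (α c d : ℝ) : deriv (tg α c d) = tg (α * c) c (d + π / 2) :=
  funext fun x => (tg_hasDerivAt α c d x).deriv

lemma tg_iteratedDeriv (α c d : ℝ) (k : ℕ) :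
    iteratedDeriv k (tg α c d) = tg (α * c ^ k) c (d + k * (π / 2)) := by
  induction k with
  | zero => simp [tg]
  | succ k ih =>
    rw [iteratedDeriv_succ, ih, tg_deriv]
    funext x
    simp only [tg]
    push_cast
    ring_nf

lemma tg2_iteratedDeriv (α c d β e f : ℝ) (k : ℕ) :
    iteratedDeriv k (fun x => tg α c d x + tg β e f x) =
      fun x => tg (α * c ^ k) c (d + k * (π / 2)) x + tg (β * e ^ k) e (f + k * (π / 2)) x := by
  induction k with
  | zero => simp [tg]
  | succ k ih =>
    rw [iteratedDeriv_succ, ih]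
    funext x
    rw [deriv_fun_add ((tg_hasDerivAt _ _ _ x).differentiableAt) ((tg_hasDerivAt _ _ _ x).differentiableAt)]
    rw [(tg_hasDerivAt _ _ _ x).deriv, (tg_hasDerivAt _ _ _ x).deriv]
    simp only [tg]
    push_cast
    ring_nf

lemma tg_periodic (α d : ℝ) (q : ℕ) (x : ℝ) :
    tg α (2 * π * (q + 1)) d (x + 1) = tg α (2 * π * (q + 1)) d x := by
  unfold tg
  have h := Real.cos_add_int_mul_two_pi (2 * π * (q + 1) * x + d) ((q : ℤ) + 1)
  rw [show 2 * π * ((q : ℝ) + 1) * (x + 1) + d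
      = (2 * π * ((q : ℝ) + 1) * x + d) + ((((q : ℤ) + 1) : ℤ) : ℝ) * (2 * π) by push_cast; ring]
  rw [h]

lemma iteratedDeriv_const' (k : ℕ) (r : ℝ) :
    iteratedDeriv k (fun _ : ℝ => r) = fun _ => if k = 0 then r else 0 := by
  have h : (fun _ : ℝ => r) = tg r 0 (0 : ℝ) := by
    funext x; simp [tg]
  rw [h, tg_iteratedDeriv]
  funext x
  rcases Nat.eq_zero_or_pos k with hk | hk
  · simp [hk, tg]
  · simp [tg, Nat.pos_iff_ne_zero.mp hk, zero_pow (Nat.pos_iff_ne_zero.mp hk)]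

lemma poly_vanish {M : ℕ} (t : ℕ → ℝ)
    (h : ∀ q : ℕ, ∑ k ∈ Finset.range M, t k * (2 * π * (q + 1)) ^ k = 0) :
    ∀ k, k < M → t k = 0 := by
  set P : Polynomial ℝ := ∑ k ∈ Finset.range M, Polynomial.C (t k) * Polynomial.X ^ k with hP
  have hroot : ∀ q : ℕ, P.IsRoot (2 * π * (q + 1)) := by
    intro q
    have := h q
    simp only [Polynomial.IsRoot, hP, Polynomial.eval_finset_sum, Polynomial.eval_mul,
      Polynomial.eval_C, Polynomial.eval_pow, Polynomial.eval_X]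
    exact this
  have hπ : (2 * π : ℝ) ≠ 0 := by positivity
  have hinj : Function.Injective (fun q : ℕ => 2 * π * ((q : ℝ) + 1)) := by
    intro a b hab
    simp only at hab
    have h2 : ((a : ℝ) + 1) = ((b : ℝ) + 1) := mul_left_cancel₀ hπ hab
    have : (a : ℝ) = b := by linarith
    exact_mod_cast this
  have hPzero : P = 0 := by
    apply Polynomial.eq_zero_of_infinite_isRoot
    exact Set.infinite_of_injective_forall_mem hinj (fun q => hroot q)
  intro k hk
  have := congrArg (fun p : Polynomial ℝ => p.coeff k) hPzero
  simp only [hP, Polynomial.finset_sum_coeff, Polynomial.coeff_C_mul, Polynomial.coeff_X_pow,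
    Polynomial.coeff_zero] at this
  rw [Finset.sum_eq_single k] at this
  · simpa using this
  · intro b _ hbk
    simp [Ne.symm hbk]
  · intro hknot
    exact absurd (Finset.mem_range.mpr hk) hknot

lemma pow_ineq (k : ℕ) (hk : 2 ≤ k) (hk3 : k ≠ 3) :
    (2 * 2 ^ k - 3 ^ k / 2 - 5 / 2 : ℝ) ≠ 0 := by
  rcases lt_or_ge k 4 with h4 | h4
  · interval_cases k
    · norm_num
    · omega
  · have hnat : ∀ j : ℕ, 4 ≤ j → 4 * 2 ^ j < 3 ^ j + 5 := by
      intro j hj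
      induction j, hj using Nat.le_induction with
      | base => norm_num
      | succ i hi ih =>
        have e1 : 2 ^ (i + 1) = 2 * 2 ^ i := by ring
        have e2 : 3 ^ (i + 1) = 3 * 3 ^ i := by ring
        have h2 : 16 ≤ 2 ^ i := by
          calc (16 : ℕ) = 2 ^ 4 := by norm_num
          _ ≤ 2 ^ i := Nat.pow_le_pow_right (by norm_num) hi
        have h3 : 81 ≤ 3 ^ i := by
          calc (81 : ℕ) = 3 ^ 4 := by norm_num
          _ ≤ 3 ^ i := Nat.pow_le_pow_right (by norm_num) hi
        omega
    have := hnat k h4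
    have hc : (4 * 2 ^ k : ℝ) < 3 ^ k + 5 := by exact_mod_cast this
    intro hcontra
    nlinarith [hc]

end
end GFAux

open Real GFAux in
/-- The second Gelfand–Fuks cohomology group of `Vect(S¹)` is one-dimensional,
generated by the Virasoro cocycle. -/
theorem second_gelfand_fuks (n : ℕ) (a : ℕ → ℝ → ℝ)
    (ha : ∀ k, k ≤ n → SmoothPeriodic (a k))
    (K : (ℝ → ℝ) → ℝ → ℝ)
    (hK : ∀ u x, K u x = ∑ k ∈ Finset.range (n + 1), a k x * iteratedDeriv k u x)
    (hcocycle : ∀ u v : ℝ → ℝ, SmoothPeriodic u → SmoothPeriodic v → ∀ x,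
      K (fun y => u y * deriv v y - deriv u y * v y) x =
        2 * K v x * deriv u x + deriv (K v) x * u x
          - 2 * K u x * deriv v x - deriv (K u) x * v x) :
    ∃ (lam : ℝ) (m : ℝ → ℝ), SmoothPeriodic m ∧
      ∀ u : ℝ → ℝ, SmoothPeriodic u → ∀ x,
        K u x = lam * iteratedDeriv 3 u x + 2 * m x * deriv u x + deriv m x * u x := by
  set N : ℕ := n + 3 with hN
  set b : ℕ → ℝ → ℝ := fun k => if k ≤ n then a k else fun _ => 0 with hbdef
  have hb : ∀ k, SmoothPeriodic (b k) := by
    intro k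
    by_cases hkn : k ≤ n
    · simp only [hbdef, if_pos hkn]; exact ha k hkn
    · simp only [hbdef, if_neg hkn]; exact ⟨contDiff_const, fun _ => rfl⟩
  have hbd : ∀ k, Differentiable ℝ (b k) := fun k => (hb k).1.differentiable (by simp)
  have hK' : ∀ u x, K u x = ∑ k ∈ Finset.range (N + 1), b k x * iteratedDeriv k u x := by
    intro u x
    rw [hK]
    have h1 : ∑ k ∈ Finset.range (n + 1), a k x * iteratedDeriv k u x
        = ∑ k ∈ Finset.range (n + 1), b k x * iteratedDeriv k u x := by
      apply Finset.sum_congr rfl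
      intro k hk
      have : k ≤ n := by simpa [Nat.lt_succ_iff] using hk
      simp [hbdef, this]
    rw [h1]
    apply Finset.sum_subset
    · intro k hk
      simp only [Finset.mem_range] at *
      omega
    · intro k _ hk
      simp only [Finset.mem_range, not_lt] at hk
      have : ¬ k ≤ n := by omega
      simp [hbdef, this]
  have hitd : ∀ (v : ℝ → ℝ), ContDiff ℝ (⊤ : ℕ∞) v → ∀ (k : ℕ) (x : ℝ),
      HasDerivAt (iteratedDeriv k v) (iteratedDeriv (k + 1) v x) x := by
    intro v hv k x
    have hdd : Differentiable ℝ (iteratedDeriv k v) := by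
      rw [iteratedDeriv_eq_iterate]
      exact ((hv.of_le (by simp)).iterate_deriv k).differentiable (by simp)
    have hd := (hdd x).hasDerivAt
    rw [iteratedDeriv_succ]
    exact hd
  have hderivK : ∀ (v : ℝ → ℝ), ContDiff ℝ (⊤ : ℕ∞) v → ∀ x, deriv (K v) x
      = ∑ k ∈ Finset.range (N + 1),
          (deriv (b k) x * iteratedDeriv k v x + b k x * iteratedDeriv (k + 1) v x) := by
    intro v hv x
    have hfun : K v = fun y => ∑ k ∈ Finset.range (N + 1), b k y * iteratedDeriv k v y :=
      funext fun y => hK' v y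
    rw [hfun]
    exact (HasDerivAt.fun_sum (fun k _ => ((hbd k x).hasDerivAt.mul (hitd v hv k x)))).deriv
  have hK1 : ∀ (r : ℝ) (x : ℝ), K (fun _ => r) x = b 0 x * r := by
    intro r x
    rw [hK']
    rw [Finset.sum_eq_single 0]
    · simp
    · intro k _ hk
      rw [iteratedDeriv_const']
      simp [hk]
    · intro h
      exact absurd (Finset.mem_range.mpr (by omega)) h
  have hK1' : ∀ x, deriv (K (fun _ : ℝ => (1 : ℝ))) x = deriv (b 0) x := by
    intro x
    rw [hderivK _ contDiff_const x]
    rw [Finset.sum_eq_single 0]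
    · rw [iteratedDeriv_const', iteratedDeriv_const']
      simp
    · intro k _ hk
      rw [iteratedDeriv_const', iteratedDeriv_const']
      simp [hk]
    · intro h
      exact absurd (Finset.mem_range.mpr (by omega)) h
  -- Step A
  have hA : ∀ x₀ : ℝ, (∀ k, 2 ≤ k → k ≤ N → deriv (b k) x₀ = 0)
      ∧ deriv (b 1) x₀ = 2 * b 0 x₀ := by
    intro x₀
    have heq : ∀ δ : ℝ, ∀ k, k < N + 1 →
        deriv (b k) x₀ * Real.cos (δ + k * (π / 2))
          - (if k = 1 then 2 * b 0 x₀ * Real.cos (δ + π / 2) else 0)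
          - (if k = 0 then deriv (b 0) x₀ * Real.cos δ else 0) = 0 := by
      intro δ
      apply poly_vanish
      intro q
      set c : ℝ := 2 * π * (q + 1) with hc
      clear_value c
      set v : ℝ → ℝ := tg 1 c (δ - c * x₀) with hv
      have hvsp : SmoothPeriodic v :=
        ⟨tg_contDiff _ _ _, by intro x; rw [hv, hc]; exact tg_periodic _ _ _ x⟩
      have husp : SmoothPeriodic (fun _ : ℝ => (1 : ℝ)) := ⟨contDiff_const, fun _ => rfl⟩
      have hco := hcocycle (fun _ => 1) v husp hvsp x₀
      simp only [hv, deriv_const', tg_deriv, one_mul, zero_mul, sub_zero, mul_zero,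
        mul_one, zero_add, add_zero] at hco
      rw [show δ - c * x₀ + π / 2 = δ + π / 2 - c * x₀ by ring] at hco
      -- atoms
      set P : ℝ := ∑ k ∈ Finset.range (N + 1),
        b k x₀ * Real.cos (δ + π / 2 + k * (π / 2)) * c ^ (k + 1) with hP
      set S1 : ℝ := ∑ k ∈ Finset.range (N + 1),
        deriv (b k) x₀ * Real.cos (δ + k * (π / 2)) * c ^ k with hS1
      have e1 : K (fun y => tg c c (δ + π / 2 - c * x₀) y) x₀ = P := by
        rw [hK', hP]
        apply Finset.sum_congr rfl
        intro k _
        rw [tg_iteratedDeriv]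
        simp only [tg]
        rw [show c * x₀ + (δ + π / 2 - c * x₀ + k * (π / 2)) = δ + π / 2 + k * (π / 2) by ring]
        ring
      have e2 : deriv (K (tg 1 c (δ - c * x₀))) x₀ = S1 + P := by
        rw [hderivK _ (tg_contDiff _ _ _) x₀, hS1, hP, ← Finset.sum_add_distrib]
        apply Finset.sum_congr rfl
        intro k _
        rw [tg_iteratedDeriv, tg_iteratedDeriv]
        simp only [tg]
        push_cast
        rw [show c * x₀ + (δ - c * x₀ + (k : ℝ) * (π / 2)) = δ + k * (π / 2) by ring,
          show c * x₀ + (δ - c * x₀ + ((k : ℝ) + 1) * (π / 2)) = δ + π / 2 + k * (π / 2) by ring]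
        ring
      have e4 : tg c c (δ + π / 2 - c * x₀) x₀ = c * Real.cos (δ + π / 2) := by
        simp only [tg]
        rw [show c * x₀ + (δ + π / 2 - c * x₀) = δ + π / 2 by ring]
        try ring
      have e6 : tg 1 c (δ - c * x₀) x₀ = Real.cos δ := by
        simp only [tg]
        rw [show c * x₀ + (δ - c * x₀) = δ by ring]
        ring
      rw [e1, e2, hK1, hK1', e4, e6] at hco
      have egoal : ∑ k ∈ Finset.range (N + 1),
          (deriv (b k) x₀ * Real.cos (δ + k * (π / 2))
            - (if k = 1 then 2 * b 0 x₀ * Real.cos (δ + π / 2) else 0)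
            - (if k = 0 then deriv (b 0) x₀ * Real.cos δ else 0)) * c ^ k
          = S1 - 2 * b 0 x₀ * Real.cos (δ + π / 2) * c - deriv (b 0) x₀ * Real.cos δ := by
        have split : ∀ k ∈ Finset.range (N + 1),
            (deriv (b k) x₀ * Real.cos (δ + k * (π / 2))
              - (if k = 1 then 2 * b 0 x₀ * Real.cos (δ + π / 2) else 0)
              - (if k = 0 then deriv (b 0) x₀ * Real.cos δ else 0)) * c ^ k
            = deriv (b k) x₀ * Real.cos (δ + k * (π / 2)) * c ^ k
              - (if k = 1 then 2 * b 0 x₀ * Real.cos (δ + π / 2) * c else 0)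
              - (if k = 0 then deriv (b 0) x₀ * Real.cos δ else 0) := by
          intro k _
          rcases Nat.lt_or_ge k 2 with hk2 | hk2
          · interval_cases k <;> simp <;> ring
          · have h1 : k ≠ 1 := by omega
            have h0 : k ≠ 0 := by omega
            simp [h0, h1]
            try ring
        rw [Finset.sum_congr rfl split, Finset.sum_sub_distrib, Finset.sum_sub_distrib]
        rw [Finset.sum_ite_eq' (Finset.range (N + 1)) 1
          (fun _ => 2 * b 0 x₀ * Real.cos (δ + π / 2) * c)]
        rw [Finset.sum_ite_eq' (Finset.range (N + 1)) 0
          (fun _ => deriv (b 0) x₀ * Real.cos δ)]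
        rw [if_pos (Finset.mem_range.mpr (by omega)), if_pos (Finset.mem_range.mpr (by omega))]
      rw [egoal]
      linear_combination (-1 : ℝ) * hco
    constructor
    · intro k hk2 hkN
      have hc := heq 0 k (by omega)
      have hs := heq (-(π / 2)) k (by omega)
      have hk1 : k ≠ 1 := by omega
      have hk0 : k ≠ 0 := by omega
      simp only [if_neg hk1, if_neg hk0, sub_zero, zero_add] at hc hs
      rw [show -(π / 2) + (k : ℝ) * (π / 2) = (k : ℝ) * (π / 2) - π / 2 by ring,
        Real.cos_sub_pi_div_two] at hs
      have hpy := Real.sin_sq_add_cos_sq ((k : ℝ) * (π / 2))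
      linear_combination Real.sin ((k : ℝ) * (π / 2)) * hs
        + Real.cos ((k : ℝ) * (π / 2)) * hc - deriv (b k) x₀ * hpy
    · have hs := heq (-(π / 2)) 1 (by omega)
      push_cast at hs
      rw [show -(π / 2) + 1 * (π / 2) = (0 : ℝ) by ring] at hs
      rw [show -(π / 2) + π / 2 = (0 : ℝ) by ring] at hs
      simp at hs
      linarith [hs]

  -- Step B : b k x₀ * cos (k π/2) = 0 for 1 ≤ k ≤ N
  have hB : ∀ x₀ : ℝ, ∀ k, 1 ≤ k → k ≤ N → b k x₀ * Real.cos ((k : ℝ) * (π / 2)) = 0 := by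
    intro x₀
    have heq : ∀ j, j < N + 2 →
        ((if j = 0 then (0:ℝ) else b (j-1) x₀ * Real.cos (((j-1 : ℕ) : ℝ) * (π / 2)))
          - (if j = 1 then b 0 x₀ else 0)) = 0 := by
      apply poly_vanish
      intro q
      set c : ℝ := 2 * π * (q + 1) with hc
      clear_value c
      have husp : SmoothPeriodic (tg 1 c (-(π / 2) - c * x₀)) :=
        ⟨tg_contDiff _ _ _, by intro x; rw [hc]; exact tg_periodic _ _ _ x⟩
      have hvsp : SmoothPeriodic (tg 1 c (0 - c * x₀)) :=
        ⟨tg_contDiff _ _ _, by intro x; rw [hc]; exact tg_periodic _ _ _ x⟩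
      have hco := hcocycle _ _ husp hvsp x₀
      have hbr : (fun y => tg 1 c (-(π / 2) - c * x₀) y * deriv (tg 1 c (0 - c * x₀)) y
          - deriv (tg 1 c (-(π / 2) - c * x₀)) y * tg 1 c (0 - c * x₀) y)
          = fun _ : ℝ => -c := by
        funext y
        rw [tg_deriv, tg_deriv]
        simp only [tg]
        rw [show c * y + (-(π / 2) - c * x₀) = (c * y - c * x₀) - π / 2 by ring,
            show c * y + (0 - c * x₀ + π / 2) = (c * y - c * x₀) + π / 2 by ring,
            show c * y + (-(π / 2) - c * x₀ + π / 2) = c * y - c * x₀ by ring,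
            show c * y + (0 - c * x₀) = c * y - c * x₀ by ring,
            Real.cos_sub_pi_div_two, Real.cos_add_pi_div_two]
        linear_combination (-(c : ℝ)) * Real.sin_sq_add_cos_sq (c * y - c * x₀)
      rw [hbr, hK1] at hco
      simp only [tg_deriv] at hco
      set SC : ℝ := ∑ k ∈ Finset.range (N + 1),
        b k x₀ * Real.cos ((k : ℝ) * (π / 2)) * c ^ k with hSC
      have eu : tg 1 c (-(π / 2) - c * x₀) x₀ = 0 := by
        simp only [tg]
        rw [show c * x₀ + (-(π / 2) - c * x₀) = -(π / 2) by ring]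
        simp
      have edu : tg (1 * c) c (-(π / 2) - c * x₀ + π / 2) x₀ = c := by
        simp only [tg]
        rw [show c * x₀ + (-(π / 2) - c * x₀ + π / 2) = 0 by ring]
        simp
      have ev : tg 1 c (0 - c * x₀) x₀ = 1 := by
        simp only [tg]
        rw [show c * x₀ + (0 - c * x₀) = 0 by ring]
        simp
      have edv : tg (1 * c) c (0 - c * x₀ + π / 2) x₀ = 0 := by
        simp only [tg]
        rw [show c * x₀ + (0 - c * x₀ + π / 2) = π / 2 by ring]
        simp
      have eKv : K (tg 1 c (0 - c * x₀)) x₀ = SC := by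
        rw [hK', hSC]
        apply Finset.sum_congr rfl
        intro k _
        rw [tg_iteratedDeriv]
        simp only [tg]
        rw [show c * x₀ + (0 - c * x₀ + (k : ℝ) * (π / 2)) = (k : ℝ) * (π / 2) by ring]
        ring
      have eDKu : deriv (K (tg 1 c (-(π / 2) - c * x₀))) x₀ = 2 * b 0 x₀ * c + c * SC := by
        rw [hderivK _ (tg_contDiff _ _ _) x₀]
        have hterm : ∀ k ∈ Finset.range (N + 1),
            deriv (b k) x₀ * iteratedDeriv k (tg 1 c (-(π / 2) - c * x₀)) x₀
              + b k x₀ * iteratedDeriv (k + 1) (tg 1 c (-(π / 2) - c * x₀)) x₀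
            = (if k = 1 then 2 * b 0 x₀ * c else 0)
              + c * (b k x₀ * Real.cos ((k : ℝ) * (π / 2)) * c ^ k) := by
          intro k hkmem
          rw [tg_iteratedDeriv, tg_iteratedDeriv]
          simp only [tg]
          push_cast
          rw [show c * x₀ + (-(π / 2) - c * x₀ + (k : ℝ) * (π / 2))
                = (k : ℝ) * (π / 2) - π / 2 by ring,
              show c * x₀ + (-(π / 2) - c * x₀ + ((k : ℝ) + 1) * (π / 2))
                = (k : ℝ) * (π / 2) by ring,
              Real.cos_sub_pi_div_two]
          rcases Nat.lt_or_ge k 2 with hk2 | hk2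
          · interval_cases k
            · norm_num
              ring
            · rw [if_pos rfl, (hA x₀).2]
              norm_num [Real.sin_pi_div_two]
              try ring
          · have h1 : k ≠ 1 := by omega
            have hkN : k ≤ N := by
              simp only [Finset.mem_range] at hkmem; omega
            rw [(hA x₀).1 k hk2 hkN, if_neg h1]
            ring
        rw [Finset.sum_congr rfl hterm, Finset.sum_add_distrib,
          Finset.sum_ite_eq' (Finset.range (N + 1)) 1 (fun _ => 2 * b 0 x₀ * c),
          if_pos (Finset.mem_range.mpr (by omega)), ← Finset.mul_sum, ← hSC]
      rw [eKv, eDKu, eu, edu, ev, edv] at hco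
      have egoal : ∑ j ∈ Finset.range (N + 2),
          ((if j = 0 then (0:ℝ) else b (j-1) x₀ * Real.cos (((j-1 : ℕ) : ℝ) * (π / 2)))
            - (if j = 1 then b 0 x₀ else 0)) * c ^ j = c * SC - b 0 x₀ * c := by
        rw [Finset.sum_range_succ']
        have hterm2 : ∀ k ∈ Finset.range (N + 1),
            ((if k + 1 = 0 then (0:ℝ)
                else b (k+1-1) x₀ * Real.cos (((k+1-1 : ℕ) : ℝ) * (π / 2)))
              - (if k + 1 = 1 then b 0 x₀ else 0)) * c ^ (k+1)
            = c * (b k x₀ * Real.cos ((k : ℝ) * (π / 2)) * c ^ k)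
              - (if k = 0 then b 0 x₀ * c else 0) := by
          intro k _
          rw [if_neg (Nat.succ_ne_zero k)]
          simp only [Nat.add_sub_cancel]
          by_cases hk0 : k = 0
          · subst hk0
            norm_num
            ring
          · rw [if_neg (by omega : ¬ k + 1 = 1), if_neg hk0]
            ring
        rw [Finset.sum_congr rfl hterm2, Finset.sum_sub_distrib, ← Finset.mul_sum,
          Finset.sum_ite_eq' (Finset.range (N + 1)) 0 (fun _ => b 0 x₀ * c),
          if_pos (Finset.mem_range.mpr (by omega)), ← hSC]
        norm_num
      rw [egoal]
      linear_combination (-1 : ℝ) * hco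
    intro k hk1 hkN
    have h := heq (k + 1) (by omega)
    rw [if_neg (Nat.succ_ne_zero k), if_neg (by omega : ¬ k + 1 = 1)] at h
    simpa only [Nat.add_sub_cancel, sub_zero] using h
  -- Step C
  have hC : ∀ x₀ : ℝ, ∀ k, k ≤ N →
      b k x₀ * Real.sin ((k : ℝ) * (π / 2)) * (2 * 2 ^ k - 3 ^ k / 2 - 5 / 2) = 0 := by
    intro x₀
    have heq : ∀ j, j < N + 2 →
        (if j = 0 then (0:ℝ) else b (j-1) x₀ * Real.sin (((j-1 : ℕ) : ℝ) * (π / 2))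
          * (2 * 2 ^ (j-1) - 3 ^ (j-1) / 2 - 5 / 2)) = 0 := by
      apply poly_vanish
      intro q
      set c : ℝ := 2 * π * (q + 1) with hc
      clear_value c
      have h2c : 2 * c = 2 * π * (((2*q+1 : ℕ) : ℝ) + 1) := by
        rw [hc]; push_cast; ring
      have husp : SmoothPeriodic (tg 1 c (-(π / 2) - c * x₀)) :=
        ⟨tg_contDiff _ _ _, by intro x; rw [hc]; exact tg_periodic _ _ _ x⟩
      have hvsp : SmoothPeriodic (tg 1 (2 * c) (-(π / 2) - 2 * c * x₀)) := by
        refine ⟨tg_contDiff _ _ _, ?_⟩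
        rw [h2c]
        exact tg_periodic _ _ _
      have hco := hcocycle _ _ husp hvsp x₀
      have hbrC : (fun y => tg 1 c (-(π / 2) - c * x₀) y
            * deriv (tg 1 (2 * c) (-(π / 2) - 2 * c * x₀)) y
          - deriv (tg 1 c (-(π / 2) - c * x₀)) y * tg 1 (2 * c) (-(π / 2) - 2 * c * x₀) y)
          = fun y => tg (c/2) (3*c) (-(π / 2) - 3*c*x₀) y + tg (-(3*c)/2) c (-(π / 2) - c*x₀) y := by
        funext y
        rw [tg_deriv, tg_deriv]
        simp only [tg]
        rw [show 2*c*y + (-(π / 2) - 2*c*x₀ + π / 2) = 2*(c*y - c*x₀) by ring,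
            show 2*c*y + (-(π / 2) - 2*c*x₀) = 2*(c*y - c*x₀) - π / 2 by ring,
            show c*y + (-(π / 2) - c*x₀ + π / 2) = c*y - c*x₀ by ring,
            show c*y + (-(π / 2) - c*x₀) = (c*y - c*x₀) - π / 2 by ring,
            show 3*c*y + (-(π / 2) - 3*c*x₀) = 3*(c*y - c*x₀) - π / 2 by ring,
            Real.cos_sub_pi_div_two, Real.cos_sub_pi_div_two, Real.cos_sub_pi_div_two,
            Real.sin_two_mul, Real.cos_two_mul, Real.sin_three_mul]
        linear_combination (2*c*Real.sin (c*y - c*x₀)) * Real.sin_sq_add_cos_sq (c*y - c*x₀)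
      rw [hbrC] at hco
      simp only [tg_deriv] at hco
      set A1 : ℝ := ∑ k ∈ Finset.range (N + 1),
        b k x₀ * Real.sin ((k : ℝ) * (π / 2)) * c ^ k with hA1
      set A2 : ℝ := ∑ k ∈ Finset.range (N + 1),
        b k x₀ * Real.sin ((k : ℝ) * (π / 2)) * (2*c) ^ k with hA2
      set A3 : ℝ := ∑ k ∈ Finset.range (N + 1),
        b k x₀ * Real.sin ((k : ℝ) * (π / 2)) * (3*c) ^ k with hA3
      have eu : tg 1 c (-(π / 2) - c * x₀) x₀ = 0 := by
        simp only [tg]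
        rw [show c * x₀ + (-(π / 2) - c * x₀) = -(π / 2) by ring]
        simp
      have edu : tg (1 * c) c (-(π / 2) - c * x₀ + π / 2) x₀ = c := by
        simp only [tg]
        rw [show c * x₀ + (-(π / 2) - c * x₀ + π / 2) = 0 by ring]
        simp
      have ev2 : tg 1 (2*c) (-(π / 2) - 2 * c * x₀) x₀ = 0 := by
        simp only [tg]
        rw [show 2*c * x₀ + (-(π / 2) - 2 * c * x₀) = -(π / 2) by ring]
        simp
      have edv2 : tg (1 * (2*c)) (2*c) (-(π / 2) - 2 * c * x₀ + π / 2) x₀ = 2*c := by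
        simp only [tg]
        rw [show 2*c * x₀ + (-(π / 2) - 2 * c * x₀ + π / 2) = 0 by ring]
        simp
      have eKu : K (tg 1 c (-(π / 2) - c * x₀)) x₀ = A1 := by
        rw [hK', hA1]
        apply Finset.sum_congr rfl
        intro k _
        rw [tg_iteratedDeriv]
        simp only [tg]
        rw [show c * x₀ + (-(π / 2) - c * x₀ + (k : ℝ) * (π / 2))
              = (k : ℝ) * (π / 2) - π / 2 by ring, Real.cos_sub_pi_div_two]
        ring
      have eKv2 : K (tg 1 (2*c) (-(π / 2) - 2 * c * x₀)) x₀ = A2 := by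
        rw [hK', hA2]
        apply Finset.sum_congr rfl
        intro k _
        rw [tg_iteratedDeriv]
        simp only [tg]
        rw [show 2*c * x₀ + (-(π / 2) - 2 * c * x₀ + (k : ℝ) * (π / 2))
              = (k : ℝ) * (π / 2) - π / 2 by ring, Real.cos_sub_pi_div_two]
        ring
      have eKbr : K (fun y => tg (c/2) (3*c) (-(π / 2) - 3*c*x₀) y
            + tg (-(3*c)/2) c (-(π / 2) - c*x₀) y) x₀
          = c/2 * A3 - 3*c/2 * A1 := by
        rw [hK']
        have hterm : ∀ k ∈ Finset.range (N + 1),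
            b k x₀ * iteratedDeriv k (fun y => tg (c/2) (3*c) (-(π / 2) - 3*c*x₀) y
              + tg (-(3*c)/2) c (-(π / 2) - c*x₀) y) x₀
            = c/2 * (b k x₀ * Real.sin ((k : ℝ) * (π / 2)) * (3*c) ^ k)
              - 3*c/2 * (b k x₀ * Real.sin ((k : ℝ) * (π / 2)) * c ^ k) := by
          intro k _
          rw [tg2_iteratedDeriv]
          simp only [tg]
          rw [show 3*c*x₀ + (-(π / 2) - 3*c*x₀ + (k : ℝ) * (π / 2))
                = (k : ℝ) * (π / 2) - π / 2 by ring,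
              show c*x₀ + (-(π / 2) - c*x₀ + (k : ℝ) * (π / 2))
                = (k : ℝ) * (π / 2) - π / 2 by ring,
              Real.cos_sub_pi_div_two]
          ring
        rw [Finset.sum_congr rfl hterm, Finset.sum_sub_distrib,
          ← Finset.mul_sum, ← Finset.mul_sum, ← hA3, ← hA1]
      rw [eKbr, eKu, eKv2, eu, edu, ev2, edv2] at hco
      have egoal : ∑ j ∈ Finset.range (N + 2),
          (if j = 0 then (0:ℝ) else b (j-1) x₀ * Real.sin (((j-1 : ℕ) : ℝ) * (π / 2))
            * (2 * 2 ^ (j-1) - 3 ^ (j-1) / 2 - 5 / 2)) * c ^ j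
          = 2*c*A2 - 5*c/2*A1 - c/2*A3 := by
        rw [Finset.sum_range_succ']
        have hterm2 : ∀ k ∈ Finset.range (N + 1),
            (if k + 1 = 0 then (0:ℝ) else b (k+1-1) x₀
                * Real.sin (((k+1-1 : ℕ) : ℝ) * (π / 2))
                * (2 * 2 ^ (k+1-1) - 3 ^ (k+1-1) / 2 - 5 / 2)) * c ^ (k+1)
            = 2*c * (b k x₀ * Real.sin ((k : ℝ) * (π / 2)) * (2*c) ^ k)
              - 5*c/2 * (b k x₀ * Real.sin ((k : ℝ) * (π / 2)) * c ^ k)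
              - c/2 * (b k x₀ * Real.sin ((k : ℝ) * (π / 2)) * (3*c) ^ k) := by
          intro k _
          rw [if_neg (Nat.succ_ne_zero k)]
          simp only [Nat.add_sub_cancel]
          rw [mul_pow, mul_pow]
          ring
        rw [Finset.sum_congr rfl hterm2, Finset.sum_sub_distrib, Finset.sum_sub_distrib,
          ← Finset.mul_sum, ← Finset.mul_sum, ← Finset.mul_sum, ← hA1, ← hA2, ← hA3]
        norm_num
      rw [egoal]
      linear_combination (-1 : ℝ) * hco
    intro k hkN
    have h := heq (k + 1) (by omega)
    rw [if_neg (Nat.succ_ne_zero k)] at h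
    simpa only [Nat.add_sub_cancel] using h
  -- combine
  have hzero : ∀ k, 2 ≤ k → k ≤ N → k ≠ 3 → ∀ x, b k x = 0 := by
    intro k hk2 hkN hk3 x
    have h1 := hB x k (by omega) hkN
    have hM := pow_ineq k hk2 hk3
    have h2 : b k x * Real.sin ((k : ℝ) * (π / 2)) = 0 := by
      rcases mul_eq_zero.mp (hC x k hkN) with h | h
      · exact h
      · exact absurd h hM
    have hpy := Real.sin_sq_add_cos_sq ((k : ℝ) * (π / 2))
    linear_combination Real.sin ((k : ℝ) * (π / 2)) * h2
      + Real.cos ((k : ℝ) * (π / 2)) * h1 - b k x * hpy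
  have h3const : ∀ x : ℝ, b 3 x = b 3 0 := fun x =>
    is_const_of_deriv_eq_zero (hbd 3) (fun y => (hA y).1 3 (by omega) (by omega)) x 0
  refine ⟨b 3 0, fun x => b 1 x / 2,
    ⟨(hb 1).1.div_const 2, fun x => by simp [(hb 1).2 x]⟩, ?_⟩
  intro u hu x
  have hm' : deriv (fun y => b 1 y / 2) x = b 0 x := by
    rw [((hbd 1 x).hasDerivAt.div_const 2).deriv, (hA x).2]
    ring
  rw [hK' u x]
  have hsub : ({0,1,3} : Finset ℕ) ⊆ Finset.range (N+1) := by
    intro k hk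
    simp only [Finset.mem_insert, Finset.mem_singleton] at hk
    simp only [Finset.mem_range]
    rcases hk with h|h|h <;> omega
  rw [← Finset.sum_subset hsub (by
    intro k hk hnk
    simp only [Finset.mem_insert, Finset.mem_singleton] at hnk
    push_neg at hnk
    have hkN : k ≤ N := by simp only [Finset.mem_range] at hk; omega
    rw [hzero k (by omega) hkN (by tauto) x]
    exact zero_mul _)]
  rw [show ({0,1,3} : Finset ℕ) = insert 0 (insert 1 {3}) from rfl,
    Finset.sum_insert (by decide), Finset.sum_insert (by decide), Finset.sum_singleton,
    iteratedDeriv_zero, iteratedDeriv_one, h3const x, hm']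
  ring
end

section
/- Let n ∈ ℕ and let a₀, …, aₙ : ℝ → ℝ be smooth 1-periodic functions, and define K by (K u)(x) = Σ_{k=0}^{n} a_k(x)·u^{(k)}(x). If K satisfies the 2-cocycle condition K([u,v]) = 2·(K v)·u′ + (K v)′·u − 2·(K u)·v′ − (K u)′·v for all smooth 1-periodic u, v, then 2·a₀(x) = a₁′(x) for all x, and for every k with 2 ≤ k ≤ n the coefficient function a_k is constant. -/
open Real

lemma iteratedDeriv_const_succ : ∀ (k : ℕ) (c : ℝ), iteratedDeriv (k+1) (fun _ : ℝ => c) = fun _ => 0 := by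
  intro k
  induction k with
  | zero =>
    intro c
    rw [iteratedDeriv_one]
    funext x
    exact deriv_const x c
  | succ m ih =>
    intro c
    rw [iteratedDeriv_succ']
    have h : deriv (fun _ : ℝ => c) = fun _ : ℝ => (0:ℝ) := funext fun x => deriv_const x c
    rw [h]
    exact ih 0

lemma iteratedDeriv_sin_lin (c d : ℝ) :
    ∀ k, iteratedDeriv k (fun y => Real.sin (c*y + d)) =
      fun y => c^k * Real.sin (c*y + d + k*(π/2)) := by
  intro k
  induction k with
  | zero => simp
  | succ m ih =>
    rw [iteratedDeriv_succ, ih]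
    funext y
    have h1 : HasDerivAt (fun y : ℝ => c*y + d + m*(π/2)) c y := by
      simpa using (((hasDerivAt_id y).const_mul c).add_const d).add_const ((m:ℝ)*(π/2))
    have h2 : HasDerivAt (fun y : ℝ => Real.sin (c*y + d + m*(π/2)))
        (Real.cos (c*y + d + m*(π/2)) * c) y := by
      exact (Real.hasDerivAt_sin (c*y + d + m*(π/2))).comp y h1
    have h3 := (h2.const_mul (c^m)).deriv
    rw [h3]
    have h4 : c*y + d + (↑(m+1):ℝ)*(π/2) = (c*y + d + m*(π/2)) + π/2 := by push_cast; ring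
    rw [h4, Real.sin_add_pi_div_two]
    ring

lemma smoothPer_sin (m : ℕ) (d : ℝ) :
    SmoothPeriodic (fun y => Real.sin ((2*π*(m+1))*y + d)) := by
  constructor
  · exact Real.contDiff_sin.comp ((contDiff_const.mul contDiff_id).add contDiff_const)
  · intro x
    show Real.sin ((2*π*(m+1))*(x+1) + d) = Real.sin ((2*π*(m+1))*x + d)
    have h : (2*π*((m:ℝ)+1))*(x+1) + d = ((2*π*((m:ℝ)+1))*x + d) + (↑(m+1):ℝ)*(2*π) := by
      push_cast; ring
    rw [h, Real.sin_add_nat_mul_two_pi]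

/-- If the differential operator `K u = Σ_{k≤n} a_k u^{(k)}` with smooth 1-periodic
coefficients (extended by zero for `k > n`) satisfies the 2-cocycle condition
`K([u,v]) = ad*_u(K v) − ad*_v(K u)` on smooth 1-periodic vector fields, then
`2 a₀ = a₁′` and each coefficient `a_k` with `2 ≤ k ≤ n` is constant. -/
theorem cocycle_coefficients (n : ℕ) (a : ℕ → ℝ → ℝ)
    (ha : ∀ k, k ≤ n → SmoothPeriodic (a k))
    (ha' : ∀ k, n < k → ∀ x, a k x = 0)
    (K : (ℝ → ℝ) → ℝ → ℝ)
    (hK : ∀ u x, K u x = ∑ k ∈ Finset.range (n + 1), a k x * iteratedDeriv k u x)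
    (hcocycle : ∀ u v : ℝ → ℝ, SmoothPeriodic u → SmoothPeriodic v → ∀ x,
      K (fun y => u y * deriv v y - deriv u y * v y) x =
        2 * K v x * deriv u x + deriv (K v) x * u x
          - 2 * K u x * deriv v x - deriv (K u) x * v x) :
    (∀ x, 2 * a 0 x = deriv (a 1) x) ∧
      ∀ k, 2 ≤ k → k ≤ n → ∀ x y, a k x = a k y := by
  have hdiffa : ∀ k, k ≤ n → Differentiable ℝ (a k) := fun k hk => (ha k hk).1.differentiable (by simp)
  have hazero : ∀ k, n < k → a k = fun _ => 0 := fun k hk => funext (ha' k hk)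
  have hderiva_big : ∀ k, n < k → ∀ x, deriv (a k) x = 0 := by
    intro k hk x
    rw [hazero k hk]
    exact deriv_const x 0
  -- the key linear identity extracted from the cocycle condition with u = 1
  have key : ∀ v : ℝ → ℝ, SmoothPeriodic v → ∀ x,
      ∑ k ∈ Finset.range (n+1), deriv (a k) x * iteratedDeriv k v x
        = 2 * a 0 x * deriv v x + deriv (a 0) x * v x := by
    intro v hv x
    have hu1 : SmoothPeriodic (fun _ : ℝ => (1:ℝ)) := ⟨contDiff_const, fun _ => rfl⟩
    have h := hcocycle (fun _ => 1) v hu1 hv x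
    have hb : (fun y => (fun _ : ℝ => (1:ℝ)) y * deriv v y - deriv (fun _ : ℝ => (1:ℝ)) y * v y)
        = deriv v := by
      funext y; simp
    rw [hb] at h
    have hdu : deriv (fun _ : ℝ => (1:ℝ)) x = 0 := deriv_const x 1
    rw [hdu] at h
    have hK1 : K (fun _ => (1:ℝ)) = a 0 := by
      funext z
      rw [hK]
      rw [Finset.sum_eq_single 0]
      · simp
      · intro k hk hk0
        obtain ⟨m, rfl⟩ := Nat.exists_eq_succ_of_ne_zero hk0
        rw [iteratedDeriv_const_succ]
        ring
      · intro h0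
        exact absurd (Finset.mem_range.mpr (Nat.succ_pos n)) h0
    rw [hK1] at h
    have hKveq : K v = fun z => ∑ k ∈ Finset.range (n+1), a k z * iteratedDeriv k v z :=
      funext fun z => hK v z
    have hdKv : deriv (K v) x
        = ∑ k ∈ Finset.range (n+1),
            (deriv (a k) x * iteratedDeriv k v x + a k x * iteratedDeriv (k+1) v x) := by
      rw [hKveq]
      have H : HasDerivAt (fun z => ∑ k ∈ Finset.range (n+1), a k z * iteratedDeriv k v z)
          (∑ k ∈ Finset.range (n+1),
            (deriv (a k) x * iteratedDeriv k v x + a k x * iteratedDeriv (k+1) v x)) x := by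
        apply HasDerivAt.fun_sum
        intro k hk
        have hak : HasDerivAt (a k) (deriv (a k) x) x :=
          (hdiffa k (Nat.lt_succ_iff.mp (Finset.mem_range.mp hk)) x).hasDerivAt
        have hvk : HasDerivAt (iteratedDeriv k v) (iteratedDeriv (k+1) v x) x := by
          have hd : Differentiable ℝ (iteratedDeriv k v) :=
            hv.1.differentiable_iteratedDeriv k (by exact_mod_cast ENat.natCast_lt_top k)
          rw [iteratedDeriv_succ]
          exact (hd x).hasDerivAt
        exact hak.mul hvk
      exact H.deriv
    rw [hdKv, hK (deriv v) x] at h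
    simp_rw [← iteratedDeriv_succ'] at h
    rw [Finset.sum_add_distrib] at h
    linarith
  -- plugging in sine waves : the associated polynomial vanishes
  have key2 : ∀ x φ, ((∑ k ∈ Finset.range (n+1),
        Polynomial.monomial k (deriv (a k) x * Real.sin (φ + k*(π/2))))
      - Polynomial.monomial 1 (2 * a 0 x * Real.sin (φ + π/2))
      - Polynomial.C (deriv (a 0) x * Real.sin φ) : Polynomial ℝ) = 0 := by
    intro x φ
    apply Polynomial.eq_zero_of_infinite_isRoot
    apply Set.infinite_of_injective_forall_mem (f := fun m : ℕ => 2*π*((m:ℝ)+1))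
    · intro p q hpq
      have hπ : (2*π) ≠ 0 := by positivity
      have h2 : ((p:ℝ)+1) = ((q:ℝ)+1) := mul_left_cancel₀ hπ hpq
      have h3 : (p:ℝ) = (q:ℝ) := by linarith
      exact_mod_cast h3
    · intro m
      set t : ℝ := 2*π*((m:ℝ)+1) with ht
      show Polynomial.IsRoot _ t
      have hv := smoothPer_sin m (φ - t*x)
      have hkey := key (fun y => Real.sin ((2*π*((m:ℝ)+1))*y + (φ - t*x))) hv x
      have hiter := iteratedDeriv_sin_lin (2*π*((m:ℝ)+1)) (φ - t*x)
      have harg : ∀ k : ℕ, t*x + (φ - t*x) + k*(π/2) = φ + k*(π/2) := by intro k; ring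
      have hval : ∀ k : ℕ,
          iteratedDeriv k (fun y => Real.sin ((2*π*((m:ℝ)+1))*y + (φ - t*x))) x
            = t^k * Real.sin (φ + k*(π/2)) := by
        intro k
        rw [hiter k]
        show t ^ k * Real.sin (t * x + (φ - t * x) + (k:ℝ) * (π/2))
          = t ^ k * Real.sin (φ + (k:ℝ) * (π/2))
        rw [harg k]
      have hd1 : deriv (fun y => Real.sin ((2*π*((m:ℝ)+1))*y + (φ - t*x))) x
          = t * Real.sin (φ + π/2) := by
        rw [← iteratedDeriv_one]
        have := hval 1
        rw [this]
        norm_num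
      have hv0 : Real.sin ((2*π*((m:ℝ)+1))*x + (φ - t*x)) = Real.sin φ := by
        rw [← ht]
        congr 1
        ring
      rw [hd1] at hkey
      simp only [hval] at hkey
      rw [hv0] at hkey
      unfold Polynomial.IsRoot
      simp only [Polynomial.eval_sub, Polynomial.eval_finset_sum, Polynomial.eval_monomial,
        Polynomial.eval_C]
      have hsum : ∑ k ∈ Finset.range (n+1), deriv (a k) x * Real.sin (φ + k*(π/2)) * t^k
          = ∑ k ∈ Finset.range (n+1), deriv (a k) x * (t^k * Real.sin (φ + k*(π/2))) :=
        Finset.sum_congr rfl fun k _ => by ring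
      rw [hsum, hkey]
      ring
  -- coefficient extraction
  have coeff_eq : ∀ (x φ : ℝ) (j : ℕ), 1 ≤ j →
      (if j ≤ n then deriv (a j) x * Real.sin (φ + j*(π/2)) else 0)
        - (if 1 = j then 2 * a 0 x * Real.sin (φ + π/2) else 0) = 0 := by
    intro x φ j hj
    have h := key2 x φ
    have hc := congrArg (fun p => Polynomial.coeff p j) h
    simp only [Polynomial.coeff_sub, Polynomial.finset_sum_coeff, Polynomial.coeff_monomial,
      Polynomial.coeff_C, Polynomial.coeff_zero] at hc
    rw [Finset.sum_ite_eq' (Finset.range (n+1)) j] at hc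
    have hj0 : j ≠ 0 := by omega
    rw [if_neg hj0] at hc
    simp only [Finset.mem_range, Nat.lt_succ_iff, sub_zero] at hc
    exact hc
  constructor
  · -- 2 a₀ = a₁′
    intro x
    have h := coeff_eq x 0 1 le_rfl
    rw [if_pos rfl] at h
    have e1 : (0:ℝ) + ((1:ℕ):ℝ)*(π/2) = π/2 := by push_cast; ring
    have e2 : (0:ℝ) + π/2 = π/2 := by ring
    rw [e2, Real.sin_pi_div_two] at h
    by_cases hn : 1 ≤ n
    · rw [if_pos hn, e1, Real.sin_pi_div_two] at h
      linarith
    · have hn0 : n < 1 := by omega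
      rw [if_neg hn] at h
      have h1 : deriv (a 1) x = 0 := hderiva_big 1 hn0 x
      rw [h1]
      linarith
  · -- a_k constant for 2 ≤ k ≤ n
    intro k hk2 hkn x y
    have hd : ∀ z, deriv (a k) z = 0 := by
      intro z
      have h := coeff_eq z (π/2 - k*(π/2)) k (by omega)
      rw [if_pos hkn, if_neg (by omega : ¬ (1 = k))] at h
      have hs : Real.sin (π/2 - k*(π/2) + k*(π/2)) = 1 := by
        rw [show π/2 - (k:ℝ)*(π/2) + k*(π/2) = π/2 by ring, Real.sin_pi_div_two]
      rw [hs] at h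
      linarith
    exact is_const_of_deriv_eq_zero (hdiffa k hkn) hd x y
end

section
/- For all smooth 1-periodic functions u, v, w : ℝ → ℝ, the cyclic sum of the Virasoro cochain over the bracket vanishes: ∫₀¹ ([u,v]′·w″ − w′·[u,v]″) dx + ∫₀¹ ([v,w]′·u″ − u′·[v,w]″) dx + ∫₀¹ ([w,u]′·v″ − v′·[w,u]″) dx = 0, where [u,v] = u·v′ − u′·v. That is, vir(u,v) = ∫₀¹ (u′v″ − v′u″) dx is a 2-cocycle on Vect(S¹). -/
/-- The Lie bracket `[u,v] = u·v′ − u′·v` on `Vect(S¹)`. -/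
noncomputable def lieBr (u v : ℝ → ℝ) : ℝ → ℝ := fun x => u x * deriv v x - deriv u x * v x

/-- The derivative of a smooth function is smooth. -/
lemma smooth_deriv {f : ℝ → ℝ} (hf : ContDiff ℝ (⊤ : ℕ∞) f) : ContDiff ℝ (⊤ : ℕ∞) (deriv f) := by
  have h : ContDiff ℝ (((⊤ : ℕ∞) : WithTop ℕ∞) + 1) f := by
    rwa [show (((⊤ : ℕ∞) : WithTop ℕ∞) + 1) = ((⊤ : ℕ∞) : WithTop ℕ∞) from rfl]
  exact (contDiff_succ_iff_deriv.mp h).2.2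

/-- The derivative of a 1-periodic function is 1-periodic. -/
lemma deriv_periodic {f : ℝ → ℝ} (hf : ∀ x, f (x + 1) = f x) :
    ∀ x, deriv f (x + 1) = deriv f x := by
  intro x
  have h2 : (fun y => f (y + 1)) = f := funext hf
  calc deriv f (x + 1) = deriv (fun y => f (y + 1)) x := (deriv_comp_add_const ..).symm
    _ = deriv f x := by rw [h2]

lemma iteratedDeriv_two' (f : ℝ → ℝ) : iteratedDeriv 2 f = deriv (deriv f) := by
  rw [show (2:ℕ) = 1 + 1 from rfl, iteratedDeriv_succ, iteratedDeriv_one]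

/-- First derivative of the bracket. -/
lemma lieBr_deriv {u v : ℝ → ℝ} (hu : ContDiff ℝ (⊤ : ℕ∞) u) (hv : ContDiff ℝ (⊤ : ℕ∞) v) :
    deriv (lieBr u v) = fun x => u x * deriv (deriv v) x - deriv (deriv u) x * v x := by
  funext x
  have Du : Differentiable ℝ u := hu.differentiable (by simp)
  have Dv : Differentiable ℝ v := hv.differentiable (by simp)
  have Du1 : Differentiable ℝ (deriv u) := (smooth_deriv hu).differentiable (by simp)
  have Dv1 : Differentiable ℝ (deriv v) := (smooth_deriv hv).differentiable (by simp)
  have H : HasDerivAt (lieBr u v)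
      ((deriv u x * deriv v x + u x * deriv (deriv v) x)
        - (deriv (deriv u) x * v x + deriv u x * deriv v x)) x :=
    ((Du x).hasDerivAt.mul (Dv1 x).hasDerivAt).sub ((Du1 x).hasDerivAt.mul (Dv x).hasDerivAt)
  rw [H.deriv]; ring

/-- Second derivative of the bracket. -/
lemma lieBr_deriv2 {u v : ℝ → ℝ} (hu : ContDiff ℝ (⊤ : ℕ∞) u) (hv : ContDiff ℝ (⊤ : ℕ∞) v) :
    deriv (fun x => u x * deriv (deriv v) x - deriv (deriv u) x * v x) = fun x =>
      deriv u x * deriv (deriv v) x + u x * deriv (deriv (deriv v)) x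
        - (deriv (deriv (deriv u)) x * v x + deriv (deriv u) x * deriv v x) := by
  funext x
  have Du : Differentiable ℝ u := hu.differentiable (by simp)
  have Dv : Differentiable ℝ v := hv.differentiable (by simp)
  have Du2 : Differentiable ℝ (deriv (deriv u)) :=
    (smooth_deriv (smooth_deriv hu)).differentiable (by simp)
  have Dv2 : Differentiable ℝ (deriv (deriv v)) :=
    (smooth_deriv (smooth_deriv hv)).differentiable (by simp)
  have H : HasDerivAt (fun x => u x * deriv (deriv v) x - deriv (deriv u) x * v x)
      ((deriv u x * deriv (deriv v) x + u x * deriv (deriv (deriv v)) x)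
        - (deriv (deriv (deriv u)) x * v x + deriv (deriv u) x * deriv v x)) x :=
    ((Du x).hasDerivAt.mul (Dv2 x).hasDerivAt).sub ((Du2 x).hasDerivAt.mul (Dv x).hasDerivAt)
  rw [H.deriv]

/-- The Virasoro cochain `vir(u,v) = ∫₀¹ (u′v″ − v′u″)` is a 2-cocycle on `Vect(S¹)`:
its cyclic sum over the Lie bracket vanishes. -/
theorem virasoro_is_cocycle (u v w : ℝ → ℝ)
    (hu : SmoothPeriodic u) (hv : SmoothPeriodic v) (hw : SmoothPeriodic w) :
    (∫ x in (0:ℝ)..1,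
        (deriv (lieBr u v) x * iteratedDeriv 2 w x - deriv w x * iteratedDeriv 2 (lieBr u v) x))
      + (∫ x in (0:ℝ)..1,
          (deriv (lieBr v w) x * iteratedDeriv 2 u x - deriv u x * iteratedDeriv 2 (lieBr v w) x))
      + (∫ x in (0:ℝ)..1,
          (deriv (lieBr w u) x * iteratedDeriv 2 v x - deriv v x * iteratedDeriv 2 (lieBr w u) x))
      = 0 := by
  obtain ⟨hu, hup⟩ := hu
  obtain ⟨hv, hvp⟩ := hv
  obtain ⟨hw, hwp⟩ := hw
  -- smoothness of the derivatives
  have hu1 : ContDiff ℝ (⊤ : ℕ∞) (deriv u) := smooth_deriv hu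
  have hu2 : ContDiff ℝ (⊤ : ℕ∞) (deriv (deriv u)) := smooth_deriv hu1
  have hu3 : ContDiff ℝ (⊤ : ℕ∞) (deriv (deriv (deriv u))) := smooth_deriv hu2
  have hv1 : ContDiff ℝ (⊤ : ℕ∞) (deriv v) := smooth_deriv hv
  have hv2 : ContDiff ℝ (⊤ : ℕ∞) (deriv (deriv v)) := smooth_deriv hv1
  have hv3 : ContDiff ℝ (⊤ : ℕ∞) (deriv (deriv (deriv v))) := smooth_deriv hv2
  have hw1 : ContDiff ℝ (⊤ : ℕ∞) (deriv w) := smooth_deriv hw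
  have hw2 : ContDiff ℝ (⊤ : ℕ∞) (deriv (deriv w)) := smooth_deriv hw1
  have hw3 : ContDiff ℝ (⊤ : ℕ∞) (deriv (deriv (deriv w))) := smooth_deriv hw2
  -- continuity facts
  have cu := hu.continuous; have cu1 := hu1.continuous
  have cu2 := hu2.continuous; have cu3 := hu3.continuous
  have cv := hv.continuous; have cv1 := hv1.continuous
  have cv2 := hv2.continuous; have cv3 := hv3.continuous
  have cw := hw.continuous; have cw1 := hw1.continuous
  have cw2 := hw2.continuous; have cw3 := hw3.continuous
  -- rewrite brackets and iterated derivatives explicitly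
  simp only [iteratedDeriv_two', lieBr_deriv hu hv, lieBr_deriv2 hu hv,
    lieBr_deriv hv hw, lieBr_deriv2 hv hw, lieBr_deriv hw hu, lieBr_deriv2 hw hu]
  -- names for the explicit integrands
  set I1 : ℝ → ℝ := fun x =>
    (u x * deriv (deriv v) x - deriv (deriv u) x * v x) * deriv (deriv w) x
      - deriv w x * (deriv u x * deriv (deriv v) x + u x * deriv (deriv (deriv v)) x
        - (deriv (deriv (deriv u)) x * v x + deriv (deriv u) x * deriv v x)) with hI1
  set I2 : ℝ → ℝ := fun x =>
    (v x * deriv (deriv w) x - deriv (deriv v) x * w x) * deriv (deriv u) x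
      - deriv u x * (deriv v x * deriv (deriv w) x + v x * deriv (deriv (deriv w)) x
        - (deriv (deriv (deriv v)) x * w x + deriv (deriv v) x * deriv w x)) with hI2
  set I3 : ℝ → ℝ := fun x =>
    (w x * deriv (deriv u) x - deriv (deriv w) x * u x) * deriv (deriv v) x
      - deriv v x * (deriv w x * deriv (deriv u) x + w x * deriv (deriv (deriv u)) x
        - (deriv (deriv (deriv w)) x * u x + deriv (deriv w) x * deriv u x)) with hI3
  -- integrability
  have hc1 : Continuous I1 := by rw [hI1]; fun_prop
  have hc2 : Continuous I2 := by rw [hI2]; fun_prop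
  have hc3 : Continuous I3 := by rw [hI3]; fun_prop
  have hint1 : IntervalIntegrable I1 MeasureTheory.volume 0 1 := hc1.intervalIntegrable 0 1
  have hint2 : IntervalIntegrable I2 MeasureTheory.volume 0 1 := hc2.intervalIntegrable 0 1
  have hint3 : IntervalIntegrable I3 MeasureTheory.volume 0 1 := hc3.intervalIntegrable 0 1
  -- the antiderivative of the total integrand
  set F : ℝ → ℝ := fun x =>
    u x * deriv v x * deriv (deriv w) x - u x * deriv (deriv v) x * deriv w x
      - deriv u x * v x * deriv (deriv w) x + deriv u x * deriv (deriv v) x * w x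
      + deriv (deriv u) x * v x * deriv w x - deriv (deriv u) x * deriv v x * w x with hF
  have hFd : ∀ x, HasDerivAt F (I1 x + I2 x + I3 x) x := by
    intro x
    have Du : Differentiable ℝ u := hu.differentiable (by simp)
    have Du1 : Differentiable ℝ (deriv u) := hu1.differentiable (by simp)
    have Du2 : Differentiable ℝ (deriv (deriv u)) := hu2.differentiable (by simp)
    have Dv : Differentiable ℝ v := hv.differentiable (by simp)
    have Dv1 : Differentiable ℝ (deriv v) := hv1.differentiable (by simp)
    have Dv2 : Differentiable ℝ (deriv (deriv v)) := hv2.differentiable (by simp)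
    have Dw : Differentiable ℝ w := hw.differentiable (by simp)
    have Dw1 : Differentiable ℝ (deriv w) := hw1.differentiable (by simp)
    have Dw2 : Differentiable ℝ (deriv (deriv w)) := hw2.differentiable (by simp)
    have H :=
      (((((((Du x).hasDerivAt.mul (Dv1 x).hasDerivAt).mul (Dw2 x).hasDerivAt).sub
          (((Du x).hasDerivAt.mul (Dv2 x).hasDerivAt).mul (Dw1 x).hasDerivAt)).sub
          (((Du1 x).hasDerivAt.mul (Dv x).hasDerivAt).mul (Dw2 x).hasDerivAt)).add
          (((Du1 x).hasDerivAt.mul (Dv2 x).hasDerivAt).mul (Dw x).hasDerivAt)).add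
          (((Du2 x).hasDerivAt.mul (Dv x).hasDerivAt).mul (Dw1 x).hasDerivAt)).sub
          (((Du2 x).hasDerivAt.mul (Dv1 x).hasDerivAt).mul (Dw x).hasDerivAt)
    rw [hF, hI1, hI2, hI3]
    refine H.congr_deriv ?_
    simp only [Pi.mul_apply]
    ring
  -- combine the three integrals and apply the fundamental theorem of calculus
  rw [← intervalIntegral.integral_add hint1 hint2,
    ← intervalIntegral.integral_add (hint1.add hint2) hint3]
  have hderivF : deriv F = fun x => I1 x + I2 x + I3 x := funext fun x => (hFd x).deriv
  rw [intervalIntegral.integral_deriv_eq_sub' F hderivF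
    (fun x _ => (hFd x).differentiableAt) (((hc1.add hc2).add hc3).continuousOn)]
  -- periodicity kills the boundary terms
  have hup1 := deriv_periodic hup
  have hup2 := deriv_periodic hup1
  have hvp1 := deriv_periodic hvp
  have hvp2 := deriv_periodic hvp1
  have hwp1 := deriv_periodic hwp
  have hwp2 := deriv_periodic hwp1
  have e1 : u 1 = u 0 := by simpa using hup 0
  have e2 : deriv u 1 = deriv u 0 := by simpa using hup1 0
  have e3 : deriv (deriv u) 1 = deriv (deriv u) 0 := by simpa using hup2 0
  have e4 : v 1 = v 0 := by simpa using hvp 0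
  have e5 : deriv v 1 = deriv v 0 := by simpa using hvp1 0
  have e6 : deriv (deriv v) 1 = deriv (deriv v) 0 := by simpa using hvp2 0
  have e7 : w 1 = w 0 := by simpa using hwp 0
  have e8 : deriv w 1 = deriv w 0 := by simpa using hwp1 0
  have e9 : deriv (deriv w) 1 = deriv (deriv w) 0 := by simpa using hwp2 0
  rw [hF]
  simp only [e1, e2, e3, e4, e5, e6, e7, e8, e9]
  ring
end

section
/- Let E be a real inner product space, let ι be a type (of points of the manifold), and let P, Q : ι → E →ₗ[ℝ] E be families of linear operators that are skew-adjoint with respect to the inner product: ⟨P(x)u, v⟩ = −⟨u, P(x)v⟩ and ⟨Q(x)u, v⟩ = −⟨u, Q(x)v⟩ for all x, u, v. Let g : ℕ → ι → E be a sequence (of gradients of Hamiltonians) satisfying the Lenard recursion relation P(x)(g k x) = Q(x)(g (k+1) x) for all k ∈ ℕ and all x ∈ ι. Then for all k, l ∈ ℕ and all x ∈ ι, ⟨g k x, P(x)(g l x)⟩ = 0 and ⟨g k x, Q(x)(g l x)⟩ = 0; that is, the Hamiltonians are pairwise in involution with respect to both Poisson structures. -/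
/-!
Fix a point and put `a k l = ⟪g k, Q (g l)⟫`. Skew-adjointness of `Q` makes `a` antisymmetric,
while the recursion together with skew-adjointness of `P` gives
`a k (l + 1) = ⟪g k, P (g l)⟫ = -⟪g l, P (g k)⟫ = -a l (k + 1) = a (k + 1) l`.
Hence `a k l` depends only on `k + l`, so `a` is also symmetric and therefore zero.
The `P`-brackets vanish because `⟪g k, P (g l)⟫ = a k (l + 1)`.
-/

open scoped RealInnerProductSpace

section ShiftInvariant

variable {α : Type*} {a : ℕ → ℕ → α}

theorem eq_add_zero_of_shift (h : ∀ k l, a k (l + 1) = a (k + 1) l) (k l : ℕ) :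
    a k l = a (k + l) 0 := by
  induction l generalizing k with
  | zero => rfl
  | succ l ih => rw [h, ih, Nat.add_right_comm, Nat.add_assoc]

theorem symm_of_shift (h : ∀ k l, a k (l + 1) = a (k + 1) l) (k l : ℕ) : a k l = a l k := by
  rw [eq_add_zero_of_shift h, eq_add_zero_of_shift h l, Nat.add_comm]

theorem eq_zero_of_shift_of_antisymm {G : Type*} [AddGroup G] [IsAddTorsionFree G]
    {a : ℕ → ℕ → G} (h : ∀ k l, a k (l + 1) = a (k + 1) l) (hanti : ∀ k l, a k l = -a l k)
    (k l : ℕ) : a k l = 0 :=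
  self_eq_neg.mp <| (symm_of_shift h k l).trans (hanti l k)

end ShiftInvariant

section SkewAdjoint

variable {E : Type*} [NormedAddCommGroup E] [InnerProductSpace ℝ E]

theorem inner_apply_eq_neg_inner_apply_of_skew {T : E →ₗ[ℝ] E}
    (hT : ∀ u v, ⟪T u, v⟫ = -⟪u, T v⟫) (u v : E) : ⟪u, T v⟫ = -⟪v, T u⟫ := by
  rw [← hT, real_inner_comm]

variable {P Q : E →ₗ[ℝ] E} {g : ℕ → E}

theorem inner_lenard_shift (hP : ∀ u v, ⟪P u, v⟫ = -⟪u, P v⟫)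
    (hQ : ∀ u v, ⟪Q u, v⟫ = -⟪u, Q v⟫) (hg : ∀ k, P (g k) = Q (g (k + 1))) (k l : ℕ) :
    ⟪g k, Q (g (l + 1))⟫ = ⟪g (k + 1), Q (g l)⟫ := by
  rw [← hg, inner_apply_eq_neg_inner_apply_of_skew hP, hg,
    inner_apply_eq_neg_inner_apply_of_skew hQ (g l), neg_neg]

theorem inner_lenard_Q_eq_zero (hP : ∀ u v, ⟪P u, v⟫ = -⟪u, P v⟫)
    (hQ : ∀ u v, ⟪Q u, v⟫ = -⟪u, Q v⟫) (hg : ∀ k, P (g k) = Q (g (k + 1))) (k l : ℕ) :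
    ⟪g k, Q (g l)⟫ = 0 :=
  eq_zero_of_shift_of_antisymm (a := fun k l ↦ ⟪g k, Q (g l)⟫) (inner_lenard_shift hP hQ hg)
    (fun k l ↦ inner_apply_eq_neg_inner_apply_of_skew hQ (g k) (g l)) k l

theorem inner_lenard_P_eq_zero (hP : ∀ u v, ⟪P u, v⟫ = -⟪u, P v⟫)
    (hQ : ∀ u v, ⟪Q u, v⟫ = -⟪u, Q v⟫) (hg : ∀ k, P (g k) = Q (g (k + 1))) (k l : ℕ) :
    ⟪g k, P (g l)⟫ = 0 := by
  rw [hg]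
  exact inner_lenard_Q_eq_zero hP hQ hg k (l + 1)

end SkewAdjoint

/-- On a manifold with two Poisson structures given by families of skew-adjoint
operators `P x` and `Q x`, if the gradients `g k` of a sequence of Hamiltonians
satisfy the Lenard recursion relation `P x (g k x) = Q x (g (k+1) x)`, then the
Hamiltonians are pairwise in involution with respect to both Poisson structures. -/
theorem lenard_recursion_involution {E : Type*} [NormedAddCommGroup E]
    [InnerProductSpace ℝ E] {ι : Type*} (P Q : ι → E →ₗ[ℝ] E)
    (hP : ∀ (x : ι) (u v : E), ⟪P x u, v⟫ = -⟪u, P x v⟫)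
    (hQ : ∀ (x : ι) (u v : E), ⟪Q x u, v⟫ = -⟪u, Q x v⟫)
    (g : ℕ → ι → E)
    (hg : ∀ (k : ℕ) (x : ι), P x (g k x) = Q x (g (k + 1) x)) :
    ∀ (k l : ℕ) (x : ι), ⟪g k x, P x (g l x)⟫ = 0 ∧ ⟪g k x, Q x (g l x)⟫ = 0 := fun k l x ↦
  ⟨inner_lenard_P_eq_zero (hP x) (hQ x) (g := (g · x)) (hg · x) k l,
    inner_lenard_Q_eq_zero (hP x) (hQ x) (g := (g · x)) (hg · x) k l⟩
end

section
/- Let E be a real inner product space and X : E → E a continuously differentiable map (ContDiff ℝ 1) such that for every m ∈ E the Fréchet derivative X′(m) is symmetric with respect to the inner product, i.e. ⟨X′(m)u, v⟩ = ⟨X′(m)v, u⟩ for all u, v ∈ E. Then X is a gradient: the function F : E → ℝ defined by F(m) = ∫₀¹ ⟨X(t•m), m⟩ dt satisfies, for every m ∈ E, that F is Fréchet differentiable at m with derivative h ↦ ⟨X(m), h⟩. -/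
open scoped RealInnerProductSpace
open Metric MeasureTheory

set_option maxHeartbeats 1000000 in
set_option synthInstance.maxHeartbeats 200000 in
/-- A `C¹` vector field `X` on an inner product space whose Fréchet derivative
`X′(m)` is everywhere symmetric is a gradient: the function
`F(m) = ∫₀¹ ⟨X(t•m), m⟩ dt` has Fréchet derivative `h ↦ ⟨X(m), h⟩` at every `m`. -/
theorem symmetric_derivative_is_gradient {E : Type*} [NormedAddCommGroup E]
    [InnerProductSpace ℝ E] (X : E → E) (hX : ContDiff ℝ 1 X)
    (hsym : ∀ (m u v : E), ⟪fderiv ℝ X m u, v⟫ = ⟪fderiv ℝ X m v, u⟫) :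
    ∀ m : E, HasFDerivAt (fun m' : E => ∫ t in (0:ℝ)..1, ⟪X (t • m'), m'⟫)
      (innerSL ℝ (X m)) m := by
  intro m
  have hXc : Continuous X := hX.continuous
  have hX' : Continuous (fderiv ℝ X) := hX.continuous_fderiv one_ne_zero
  have hdiff : ∀ y : E, HasFDerivAt X (fderiv ℝ X y) y :=
    fun y => (hX.differentiable one_ne_zero y).hasFDerivAt
  -- the candidate derivative of `x ↦ ⟪X (t • x), x⟫` at `x`
  set F' : E → ℝ → (E →L[ℝ] ℝ) := fun x t =>
    (innerSL ℝ x).comp (t • fderiv ℝ X (t • x)) + innerSL ℝ (X (t • x)) with hF'def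
  have hF'cont : ∀ x : E, Continuous fun t : ℝ => F' x t := by
    intro x
    apply Continuous.add
    · exact (ContinuousLinearMap.compL ℝ E E ℝ (innerSL ℝ x)).continuous.comp
        (continuous_id.smul (hX'.comp (continuous_id.smul continuous_const)))
    · exact (innerSL ℝ).continuous.comp (hXc.comp (continuous_id.smul continuous_const))
  -- differentiability in the parameter
  have hdiffx : ∀ (t : ℝ) (x : E),
      HasFDerivAt (fun x' : E => ⟪X (t • x'), x'⟫) (F' x t) x := by
    intro t x
    have h1 : HasFDerivAt (fun x' : E => t • x')
        (t • ContinuousLinearMap.id ℝ E) x := (hasFDerivAt_id x).const_smul t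
    have h2 := (hdiff (t • x)).comp x h1
    have h3 := h2.inner ℝ (hasFDerivAt_id x)
    refine HasFDerivAt.congr_fderiv (f := fun x' : E => ⟪X (t • x'), x'⟫) h3 ?_
    ext h
    simp [hF'def, fderivInnerCLM_apply, real_inner_smul_right, real_inner_comm]
    ring
  -- uniform bound on the derivative near `m`
  set S : Set E := (fun t : ℝ => t • m) '' Set.Icc 0 1 with hSdef
  have hScomp : IsCompact S := isCompact_Icc.image (continuous_id.smul continuous_const)
  set g : E → ℝ := fun y => ‖X y‖ + ‖fderiv ℝ X y‖ with hgdef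
  have hgc : Continuous g := hXc.norm.add hX'.norm
  obtain ⟨C, hC⟩ := hScomp.exists_bound_of_continuousOn hgc.continuousOn
  have hU : IsOpen (g ⁻¹' Set.Iio (C + 1)) := isOpen_Iio.preimage hgc
  have hSU : S ⊆ g ⁻¹' Set.Iio (C + 1) := by
    intro y hy
    have := hC y hy
    have : g y ≤ C := (le_abs_self _).trans ((Real.norm_eq_abs _ ▸ this))
    simpa [Set.mem_preimage] using lt_of_le_of_lt this (by linarith)
  obtain ⟨δ, hδpos, hδ⟩ := hScomp.exists_thickening_subset_open hU hSU
  set ε : ℝ := min δ 1 with hεdef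
  have hεpos : 0 < ε := lt_min hδpos one_pos
  have hgb : ∀ t ∈ Set.Icc (0:ℝ) 1, ∀ x ∈ ball m ε, g (t • x) < C + 1 := by
    intro t ht x hx
    have htm : t • m ∈ S := ⟨t, ht, rfl⟩
    have hdist : dist (t • x) (t • m) < δ := by
      have : dist (t • x) (t • m) = |t| * dist x m := by
        simp [dist_eq_norm, ← smul_sub, norm_smul, Real.norm_eq_abs]
      rw [this]
      have h1 : |t| ≤ 1 := abs_le.2 ⟨by linarith [ht.1], ht.2⟩
      calc |t| * dist x m ≤ 1 * dist x m :=
            mul_le_mul_of_nonneg_right h1 dist_nonneg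
        _ = dist x m := one_mul _
        _ < ε := hx
        _ ≤ δ := min_le_left _ _
    have : t • x ∈ thickening δ S :=
      mem_thickening_iff.2 ⟨t • m, htm, hdist⟩
    exact hδ this
  have hnormx : ∀ x ∈ ball m ε, ‖x‖ ≤ ‖m‖ + 1 := by
    intro x hx
    have : dist x m < 1 := lt_of_lt_of_le hx (min_le_right _ _)
    calc ‖x‖ = ‖m + (x - m)‖ := by rw [add_sub_cancel]
      _ ≤ ‖m‖ + ‖x - m‖ := norm_add_le _ _
      _ ≤ ‖m‖ + 1 := by
          have := this; rw [dist_eq_norm] at this; linarith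
  have hbound : ∀ t ∈ Set.Icc (0:ℝ) 1, ∀ x ∈ ball m ε,
      ‖F' x t‖ ≤ (‖m‖ + 1) * (C + 1) + (C + 1) := by
    intro t ht x hx
    have hg1 := hgb t ht x hx
    have hXb : ‖X (t • x)‖ ≤ C + 1 := by
      have : (0:ℝ) ≤ ‖fderiv ℝ X (t • x)‖ := norm_nonneg _
      have h := hg1; simp only [hgdef] at h; linarith
    have hDb : ‖fderiv ℝ X (t • x)‖ ≤ C + 1 := by
      have : (0:ℝ) ≤ ‖X (t • x)‖ := norm_nonneg _
      have h := hg1; simp only [hgdef] at h; linarith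
    have h1 : ‖(innerSL ℝ x).comp (t • fderiv ℝ X (t • x))‖ ≤ (‖m‖ + 1) * (C + 1) := by
      calc ‖(innerSL ℝ x).comp (t • fderiv ℝ X (t • x))‖
          ≤ ‖innerSL ℝ x‖ * ‖t • fderiv ℝ X (t • x)‖ := ContinuousLinearMap.opNorm_comp_le _ _
        _ ≤ ‖x‖ * (|t| * ‖fderiv ℝ X (t • x)‖) := by
            rw [norm_smul, Real.norm_eq_abs]
            exact mul_le_mul_of_nonneg_right (innerSL_apply_norm ℝ x ▸ le_rfl)
              (by positivity)
        _ ≤ (‖m‖ + 1) * (C + 1) := by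
            have h1 : |t| ≤ 1 := abs_le.2 ⟨by linarith [ht.1], ht.2⟩
            have h2 := hnormx x hx
            have h3 : |t| * ‖fderiv ℝ X (t • x)‖ ≤ C + 1 := by
              calc |t| * ‖fderiv ℝ X (t • x)‖ ≤ 1 * ‖fderiv ℝ X (t • x)‖ :=
                    mul_le_mul_of_nonneg_right h1 (norm_nonneg _)
                _ = _ := one_mul _
                _ ≤ C + 1 := hDb
            have hx0 : (0:ℝ) ≤ ‖x‖ := norm_nonneg _
            have hC1 : (0:ℝ) ≤ C + 1 := le_trans (by positivity) h3
            nlinarith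
    have h2 : ‖innerSL ℝ (X (t • x))‖ ≤ C + 1 := by
      rw [innerSL_apply_norm]; exact hXb
    calc ‖F' x t‖ ≤ ‖(innerSL ℝ x).comp (t • fderiv ℝ X (t • x))‖ + ‖innerSL ℝ (X (t • x))‖ :=
          norm_add_le _ _
      _ ≤ (‖m‖ + 1) * (C + 1) + (C + 1) := add_le_add h1 h2
  -- differentiation under the integral sign
  have main := intervalIntegral.hasFDerivAt_integral_of_dominated_of_fderiv_le
    (𝕜 := ℝ) (μ := volume) (a := 0) (b := 1)
    (F := fun x t => ⟪X (t • x), x⟫) (F' := F') (x₀ := m)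
    (bound := fun _ => (‖m‖ + 1) * (C + 1) + (C + 1)) (ball_mem_nhds m hεpos)
    (Filter.Eventually.of_forall fun x =>
      (Continuous.inner (hXc.comp (continuous_id.smul continuous_const))
        continuous_const).aestronglyMeasurable)
    ((Continuous.inner (hXc.comp (continuous_id.smul continuous_const))
        continuous_const).intervalIntegrable 0 1)
    (hF'cont m).aestronglyMeasurable
    (Filter.Eventually.of_forall fun t ht x hx => by
      rw [Set.uIoc_of_le zero_le_one] at ht
      exact hbound t ⟨ht.1.le, ht.2⟩ x hx)
    (intervalIntegrable_const)
    (Filter.Eventually.of_forall fun t _ x _ => hdiffx t x)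
  -- identify the derivative with `innerSL ℝ (X m)`
  have key : (∫ t in (0:ℝ)..1, F' m t) = innerSL ℝ (X m) := by
    have hFI : IntervalIntegrable (fun t => F' m t) volume 0 1 :=
      (hF'cont m).intervalIntegrable 0 1
    ext h
    rw [ContinuousLinearMap.intervalIntegral_apply hFI h]
    have hψ : ∀ t : ℝ, HasDerivAt (fun s : ℝ => ⟪X (s • m), h⟫)
        ⟪fderiv ℝ X (t • m) m, h⟫ t := by
      intro t
      have hsm : HasDerivAt (fun s : ℝ => s • m) m t := by
        simpa using (hasDerivAt_id t).smul_const m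
      have hc := (hdiff (t • m)).comp_hasDerivAt t hsm
      simpa using hc.inner ℝ (hasDerivAt_const t h)
    have hφ : ∀ t : ℝ, HasDerivAt (fun s : ℝ => s * ⟪X (s • m), h⟫)
        (F' m t h) t := by
      intro t
      have := (hasDerivAt_id t).mul (hψ t)
      refine HasDerivAt.congr_deriv (f := fun s : ℝ => s * ⟪X (s • m), h⟫) this ?_
      simp only [hF'def, ContinuousLinearMap.add_apply, ContinuousLinearMap.comp_apply,
        ContinuousLinearMap.smul_apply, innerSL_apply_apply, real_inner_smul_right, id_eq, one_mul]
      rw [real_inner_comm ((fderiv ℝ X (t • m)) h) m, hsym (t • m) h m]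
      ring
    have hint : IntervalIntegrable (fun t => F' m t h) volume 0 1 := by
      have : Continuous fun t => F' m t h :=
        (ContinuousLinearMap.apply ℝ ℝ h).continuous.comp (hF'cont m)
      exact this.intervalIntegrable 0 1
    have := intervalIntegral.integral_eq_sub_of_hasDerivAt
      (f := fun s : ℝ => s * ⟪X (s • m), h⟫) (fun t _ => hφ t) hint
    rw [this]
    simp [real_inner_comm]
  rw [key] at main
  exact main
end

section
/- Let a, b ∈ ℝ and let u : ℝ → ℝ be a smooth function. Set m(x) = a·u(x) + b·u″(x) (i.e. m = Au with A = aI + bD²). Then for all x, 2·m(x)·u′(x) + m′(x)·u(x) = d/dx [ m(x)·u(x) + ½(a·u(x)² + b·u′(x)²) ]. In other words, the Euler vector field X_A(m) = 2mu_x + m_x u of the right-invariant metric defined by A = aI + bD² equals Q δH₃(m) with Q = aD + bD³ and H₃(m) = (1/3)∫ u(um + q(u)) dx, q(u) = ½(au² + bu_x²), so X_A is Hamiltonian for the modified Lie-Poisson structure aD + bD³. -/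
/-- For `m = Au` with `A = aI + bD²`, the Euler vector field `X_A(m) = 2mu′ + m′u`
is the image under `Q = aD + bD³ = D∘A` of the gradient of
`H₃(m) = (1/3)∫ u(um + q(u))`, `q(u) = ½(au² + bu′²)`: explicitly,
`2mu′ + m′u = (mu + ½(au² + bu′²))′`. -/
theorem euler_field_is_Q_gradient (a b : ℝ) (u : ℝ → ℝ) (hu : ContDiff ℝ (⊤ : ℕ∞) u)
    (m : ℝ → ℝ) (hm : ∀ x, m x = a * u x + b * iteratedDeriv 2 u x) :
    ∀ x, 2 * m x * deriv u x + deriv m x * u x =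
      deriv (fun y => m y * u y + (a * u y ^ 2 + b * (deriv u y) ^ 2) / 2) x := by
  have hmf : m = fun x => a * u x + b * deriv (deriv u) x := by
    funext x
    rw [hm x]
    congr 1
    simp [iteratedDeriv_succ, iteratedDeriv_zero]
  subst hmf
  have key : ∀ k : ℕ, Differentiable ℝ (deriv^[k] u) := by
    intro k
    have := hu.differentiable_iteratedDeriv k (by exact_mod_cast lt_top_iff_ne_top.mpr (by simp))
    simpa [iteratedDeriv_eq_iterate] using this
  intro x
  have d1 : HasDerivAt u (deriv u x) x := by
    simpa using (key 0 x).hasDerivAt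
  have d2 : HasDerivAt (deriv u) (deriv (deriv u) x) x := by
    simpa [Function.iterate_one] using (key 1 x).hasDerivAt
  have d3 : HasDerivAt (deriv (deriv u)) (deriv (deriv (deriv u)) x) x := by
    have := (key 2 x).hasDerivAt
    simpa [Function.iterate_succ, Function.iterate_zero, Function.comp] using this
  have dm : HasDerivAt (fun y => a * u y + b * deriv (deriv u) y)
      (a * deriv u x + b * deriv (deriv (deriv u)) x) x :=
    (d1.const_mul a).add (d3.const_mul b)
  have dR : HasDerivAt
      (fun y => (a * u y + b * deriv (deriv u) y) * u y
        + (a * u y ^ 2 + b * (deriv u y) ^ 2) / 2)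
      ((a * deriv u x + b * deriv (deriv (deriv u)) x) * u x
        + (a * u x + b * deriv (deriv u) x) * deriv u x
        + (a * (2 * u x * deriv u x) + b * (2 * deriv u x * deriv (deriv u) x)) / 2) x := by
    have h1 : HasDerivAt (fun y => u y ^ 2) (2 * u x * deriv u x) x := by
      have : HasDerivAt (fun y => u y * u y) (deriv u x * u x + u x * deriv u x) x := d1.mul d1
      simp only [pow_two]
      convert this using 1
      ring
    have h2 : HasDerivAt (fun y => (deriv u y) ^ 2)
        (2 * deriv u x * deriv (deriv u) x) x := by
      have : HasDerivAt (fun y => deriv u y * deriv u y)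
          (deriv (deriv u) x * deriv u x + deriv u x * deriv (deriv u) x) x := d2.mul d2
      simp only [pow_two]
      convert this using 1
      ring
    exact (dm.mul d1).add (((h1.const_mul a).add (h2.const_mul b)).div_const 2)
  rw [dm.deriv, dR.deriv]
  ring
end

section
/- Let s be a nonzero real polynomial (the symbol of a constant-coefficient operator A) and let α, β ∈ ℝ. Suppose that for every positive integer n, (24·n⁴·β − 6·n²·α)·s(n) = (6·n⁴·β − 6·n²·α)·s(2n). Then: if β ≠ 0, the degree of s equals 2; and if β = 0 and α ≠ 0, then s is constant (degree 0). Consequently, the only constant-coefficient invertible operators A whose Euler vector field is bi-Hamiltonian with respect to a modified Lie-Poisson structure α(D) + βD³ have symbol of the form a − b·ξ², i.e. A = aI + bD². -/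
/-!
Read as an identity of polynomials, the hypothesis says
`(24βX⁴ − 6αX²) · s(X) = (6βX⁴ − 6αX²) · s(2X)`.
Since `s(2X)` has leading coefficient `2^d · lc s` with `d = deg s`, comparing leading
coefficients gives `24β = 2^d · 6β` when `β ≠ 0`, so `2^d = 4`, and `−6α = 2^d · (−6α)`
when `β = 0`, so `2^d = 1`.
-/

open Polynomial

namespace Polynomial

theorem eq_of_eval_natCast_eq {R : Type*} [CommRing R] [IsDomain R] [CharZero R] {p q : R[X]}
    (h : ∀ n : ℕ, 0 < n → p.eval (n : R) = q.eval (n : R)) : p = q := by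
  refine eq_of_infinite_eval_eq p q (Set.infinite_of_injective_forall_mem
    (f := fun n : ℕ => ((n + 1 : ℕ) : R)) (fun a b hab => by simpa using hab) fun n => ?_)
  exact h (n + 1) n.succ_pos

theorem leadingCoeff_C_mul_X_pow_sub_C_mul_X_pow {R : Type*} [Ring R] {a : R} (ha : a ≠ 0)
    (b : R) {m n : ℕ} (hmn : m < n) : (C a * X ^ n - C b * X ^ m).leadingCoeff = a := by
  rw [leadingCoeff_sub_of_degree_lt, leadingCoeff_C_mul_X_pow]
  calc (C b * X ^ m).degree ≤ (m : WithBot ℕ) := degree_C_mul_X_pow_le m b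
    _ < (n : WithBot ℕ) := by exact_mod_cast hmn
    _ = (C a * X ^ n).degree := (degree_C_mul_X_pow n ha).symm

variable {R : Type*} [CommRing R] [NoZeroDivisors R]

theorem leadingCoeff_comp_C_mul_X {a : R} (ha : a ≠ 0) (s : R[X]) :
    (s.comp (C a * X)).leadingCoeff = s.leadingCoeff * a ^ s.natDegree := by
  rw [leadingCoeff_comp (by rw [natDegree_C_mul_X a ha]; exact one_ne_zero), leadingCoeff_C_mul_X]

theorem leadingCoeff_eq_mul_pow_of_mul_eq_mul_comp {p q s : R[X]} {a : R} (hs : s ≠ 0)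
    (ha : a ≠ 0) (h : p * s = q * s.comp (C a * X)) :
    p.leadingCoeff = q.leadingCoeff * a ^ s.natDegree := by
  have hlc := congrArg leadingCoeff h
  rw [leadingCoeff_mul, leadingCoeff_mul, leadingCoeff_comp_C_mul_X ha] at hlc
  exact mul_right_cancel₀ (leadingCoeff_ne_zero.mpr hs) (by linear_combination hlc)

end Polynomial

/-- The symbol computation in the proof that only `A = aI + bD²` gives a
bi-Hamiltonian Euler field: if a nonzero real polynomial `s` satisfies
`(24n⁴β − 6n²α)·s(n) = (6n⁴β − 6n²α)·s(2n)` for all positive integers `n`,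
then `s` has degree `2` when `β ≠ 0`, and `s` is constant when `β = 0` and `α ≠ 0`. -/
theorem symbol_degree_constraint (s : Polynomial ℝ) (hs : s ≠ 0) (α β : ℝ)
    (h : ∀ n : ℕ, 0 < n →
      (24 * (n : ℝ) ^ 4 * β - 6 * (n : ℝ) ^ 2 * α) * s.eval (n : ℝ)
        = (6 * (n : ℝ) ^ 4 * β - 6 * (n : ℝ) ^ 2 * α) * s.eval (2 * (n : ℝ))) :
    (β ≠ 0 → s.natDegree = 2) ∧ (β = 0 → α ≠ 0 → s.natDegree = 0) := by
  have hid : (C (24 * β) * X ^ 4 - C (6 * α) * X ^ 2) * s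
      = (C (6 * β) * X ^ 4 - C (6 * α) * X ^ 2) * s.comp (C 2 * X) :=
    eq_of_eval_natCast_eq fun n hn => by
      simp only [eval_mul, eval_sub, eval_C, eval_pow, eval_X, eval_comp]
      linear_combination h n hn
  have hlc := leadingCoeff_eq_mul_pow_of_mul_eq_mul_comp hs two_ne_zero hid
  have hpow (k : ℕ) (hk : (2 : ℝ) ^ s.natDegree = 2 ^ k) : s.natDegree = k :=
    (pow_right_inj₀ two_pos (by norm_num)).mp hk
  refine ⟨fun hβ => hpow 2 ?_, fun hβ hα => hpow 0 ?_⟩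
  · rw [leadingCoeff_C_mul_X_pow_sub_C_mul_X_pow (by positivity) _ (by norm_num),
      leadingCoeff_C_mul_X_pow_sub_C_mul_X_pow (by positivity) _ (by norm_num)] at hlc
    exact mul_left_cancel₀ (mul_ne_zero (by norm_num) hβ : 6 * β ≠ 0)
      (by linear_combination -hlc)
  · simp only [hβ, mul_zero, map_zero, zero_mul, zero_sub, leadingCoeff_neg,
      leadingCoeff_C_mul_X_pow] at hlc
    exact mul_left_cancel₀ (by simpa using hα : -(6 * α) ≠ 0) (by linear_combination -hlc)
end

section
/- Define a_k = (2k)! / (2^k · (k!)²) for k ∈ ℕ. For every continuously differentiable function m : ℝ → ℝ, every k ∈ ℕ, and every x ∈ ℝ, the Burgers hierarchy Lenard recursion holds: 2·m(x)·d/dx[a_k·m(x)^k] + m′(x)·a_k·m(x)^k = d/dx[a_{k+1}·m(x)^{k+1}]. That is, the gradients G_{k+1}(m) = a_k·m^k of the Hamiltonians H_{k+1}(m) = (2k)!/(2^k(k!)²(k+1)) ∫ m^{k+1} dx satisfy P_m G_{k+1} = D G_{k+2}, where P_m = mD + Dm. -/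
lemma factorial_coeff (k : ℕ) :
    ((Nat.factorial (2 * (k + 1)) : ℝ) / (2 ^ (k + 1) * (Nat.factorial (k + 1) : ℝ) ^ 2))
      * (k + 1)
    = ((Nat.factorial (2 * k) : ℝ) / (2 ^ k * (Nat.factorial k : ℝ) ^ 2)) * (2 * k + 1) := by
  have hn : Nat.factorial (2 * (k + 1)) = (2 * k + 2) * ((2 * k + 1) * Nat.factorial (2 * k)) := by
    rw [show 2 * (k + 1) = 2 * k + 1 + 1 from by ring, Nat.factorial_succ, Nat.factorial_succ]
  have hn2 : Nat.factorial (k + 1) = (k + 1) * Nat.factorial k := Nat.factorial_succ k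
  have hk : (Nat.factorial k : ℝ) ≠ 0 := by positivity
  rw [hn, hn2]
  push_cast
  field_simp
  ring

/-- The Burgers hierarchy satisfies the Lenard recursion relation: with
`a_k = (2k)! / (2^k (k!)²)`, the gradients `G_{k+1}(m) = a_k m^k` of the
Hamiltonians `H_{k+1}(m) = (2k)!/(2^k (k!)² (k+1)) ∫ m^{k+1}` satisfy
`P_m G_{k+1} = D G_{k+2}` where `P_m(g) = 2 m g′ + m′ g`. -/
theorem burgers_lenard_recursion (m : ℝ → ℝ) (hm : ContDiff ℝ 1 m) :
    ∀ (k : ℕ) (x : ℝ),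
      2 * m x * deriv (fun y =>
          ((Nat.factorial (2 * k) : ℝ) / (2 ^ k * (Nat.factorial k : ℝ) ^ 2)) * m y ^ k) x
        + deriv m x *
            (((Nat.factorial (2 * k) : ℝ) / (2 ^ k * (Nat.factorial k : ℝ) ^ 2)) * m x ^ k)
      = deriv (fun y =>
          ((Nat.factorial (2 * (k + 1)) : ℝ) /
              (2 ^ (k + 1) * (Nat.factorial (k + 1) : ℝ) ^ 2)) * m y ^ (k + 1)) x := by
  intro k x
  have hd : DifferentiableAt ℝ m x := (hm.differentiable one_ne_zero).differentiableAt
  have hpow : ∀ n : ℕ, deriv (fun y => m y ^ n) x = n * m x ^ (n - 1) * deriv m x :=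
    fun n => deriv_fun_pow hd n
  rw [deriv_const_mul _ (hd.fun_pow k), deriv_const_mul _ (hd.fun_pow (k + 1)), hpow, hpow]
  simp only [Nat.add_sub_cancel]
  have key := factorial_coeff k
  cases k with
  | zero => norm_num [Nat.factorial]
  | succ n =>
      rw [show n + 1 - 1 = n from rfl]
      push_cast at key ⊢
      linear_combination (-(m x ^ (n + 1)) * deriv m x) * key
end
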